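/- arXiv:0812.0802 — 6 statements merged into one kernel-verified Lean document; each statement's English description precedes it below -/
import Mathlib

section
/- Let σ be a pointed rational polyhedral cone in N_ℚ = ℚ^n with dual cone σ^∨ ⊆ M_ℚ, let ρ be an extremal ray of σ generated by a primitive lattice vector ν, let τ = σ^∨ ∩ ρ^⊥ be the dual facet, and let σ₁ be the cone spanned by all extremal rays of σ other than ρ. Define S_ρ = σ₁^∨ ∩ (H − μ) ∩ M, where H = {m : ⟨m, ν⟩ = 0} and μ ∈ M satisfies ⟨μ, ν⟩ = 1. Then a lattice vector e ∈ M lies in S_ρ if and only if (i) e ∉ σ^∨ ∩ M and (ii) m + e ∈ σ^∨ ∩ M for every m ∈ (σ^∨ ∩ M) \ (τ ∩ M). -/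
open scoped BigOperators Pointwise

noncomputable section

/-- Rational `n`-space `N_ℚ ≅ M_ℚ ≅ ℚⁿ`. -/
abbrev Vec (n : ℕ) := Fin n → ℚ

/-- The natural pairing `M_ℚ × N_ℚ → ℚ`. -/
def pairQ {n : ℕ} (m p : Vec n) : ℚ := ∑ i, m i * p i

/-- The dual cone of a subset of `N_ℚ`. -/
def dualCone {n : ℕ} (σ : Set (Vec n)) : Set (Vec n) :=
  {m | ∀ p ∈ σ, 0 ≤ pairQ m p}

/-- Inclusion of the lattice `M = ℤⁿ` into `M_ℚ`. -/
def toQ {n : ℕ} (v : Fin n → ℤ) : Vec n := fun i => (v i : ℚ)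

/-- A vector of `ℚⁿ` is a lattice vector if all its coordinates are integers. -/
def IsLatticeVec {n : ℕ} (v : Vec n) : Prop := ∀ i, ∃ z : ℤ, v i = (z : ℚ)

/-- The convex cone generated by a set: all finite nonnegative rational combinations. -/
def coneHull {n : ℕ} (S : Set (Vec n)) : Set (Vec n) :=
  {x | ∃ (G : Finset (Vec n)) (c : Vec n → ℚ), ↑G ⊆ S ∧ (∀ g, 0 ≤ c g) ∧
    x = ∑ g ∈ G, c g • g}

/-- A rational polyhedral cone: the cone generated by finitely many lattice vectors. -/
def IsRatPolyCone {n : ℕ} (σ : Set (Vec n)) : Prop :=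
  ∃ G : Finset (Vec n), (∀ g ∈ G, IsLatticeVec g) ∧ σ = coneHull ↑G

/-- A cone is pointed if it contains no line through the origin. -/
def PointedCone' {n : ℕ} (σ : Set (Vec n)) : Prop := σ ∩ (-σ) ⊆ {0}

/-- A cone is of full dimension if it spans the ambient space. -/
def FullDim {n : ℕ} (σ : Set (Vec n)) : Prop := Submodule.span ℚ σ = ⊤

/-- `ρ` is the extremal ray of `σ` generated by the primitive lattice vector `ν`. -/
def IsExtremalRay {n : ℕ} (σ ρ : Set (Vec n)) (ν : Vec n) : Prop :=
  IsLatticeVec ν ∧ ν ≠ 0 ∧ (∀ c : ℚ, 0 < c → IsLatticeVec (c • ν) → 1 ≤ c) ∧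
  ρ = {x | ∃ c : ℚ, 0 ≤ c ∧ x = c • ν} ∧ ρ ⊆ σ ∧
  (∀ x ∈ σ, ∀ y ∈ σ, x + y ∈ ρ → x ∈ ρ)

/-- The submonoid `σ^∨ ∩ M` of lattice points of the dual cone. -/
def latticeCone {n : ℕ} (σ : Set (Vec n)) : AddSubmonoid (Fin n → ℤ) where
  carrier := {m | toQ m ∈ dualCone σ}
  zero_mem' := by
    intro p hp
    simp [pairQ, toQ]
  add_mem' := by
    intro a b ha hb p hp
    have h : pairQ (toQ (a + b)) p = pairQ (toQ a) p + pairQ (toQ b) p := by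
      simp [pairQ, toQ, add_mul, Finset.sum_add_distrib]
    rw [h]
    exact add_nonneg (ha p hp) (hb p hp)

/-- A derivation is locally nilpotent if every element is annihilated by some iterate. -/
def IsLND {R A : Type*} [CommRing R] [CommRing A] [Algebra R A]
    (D : Derivation R A A) : Prop :=
  ∀ a : A, ∃ k : ℕ, (⇑D)^[k] a = 0

/-!
Every irredundant generator of the pointed cone `σ` spans an extremal ray, so `σ = ρ + σ₁`. Hence
`m + e ∈ σ^∨` as soon as `m ∈ σ^∨`, `e ∈ σ₁^∨` and `⟨m + e, ν⟩ ≥ 0`; for lattice points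
`⟨m, ν⟩ ≠ 0` means `⟨m, ν⟩ ≥ 1`, which gives one direction. Conversely, Farkas' lemma provides for
each extremal ray `ρ' ≠ ρ` a lattice point of `σ^∨` vanishing on `ρ'` but not on `ν`, and a lattice
point `m ∈ σ^∨` with `⟨m, ν⟩ = 1`; testing the hypothesis on these shows `e ∈ σ₁^∨` and
`⟨e, ν⟩ ≥ -1`, while `e ∉ σ^∨` forces `⟨e, ν⟩ < 0`; by integrality `⟨e, ν⟩ = -1`.
-/

open Set Matrix

section Farkas

variable {𝕜 κ : Type*} [Field 𝕜] [LinearOrder 𝕜] [IsStrictOrderedRing 𝕜] [Fintype κ]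

theorem dotProduct_nonneg_of_mem_hull {S : Set (κ → 𝕜)} {y x : κ → 𝕜}
    (hy : ∀ v ∈ S, 0 ≤ y ⬝ᵥ v) (hx : x ∈ PointedCone.hull 𝕜 S) : 0 ≤ y ⬝ᵥ x := by
  induction hx using Submodule.span_induction with
  | mem v hv => exact hy v hv
  | zero => simp
  | add v w _ _ hv hw => rw [dotProduct_add]; exact add_nonneg hv hw
  | smul c v _ hv => rw [← Nonneg.coe_smul, dotProduct_smul]; exact smul_nonneg c.2 hv

/-- Farkas' lemma over an ordered field, proved by Fourier–Motzkin elimination of one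
generator at a time. -/
theorem mem_hull_of_forall_dotProduct_nonneg {ι : Type*} [Finite ι] (a : ι → κ → 𝕜)
    (b : κ → 𝕜) (h : ∀ y, (∀ i, 0 ≤ y ⬝ᵥ a i) → 0 ≤ y ⬝ᵥ b) :
    b ∈ PointedCone.hull 𝕜 (range a) := by
  revert a b
  induction ι using Finite.induction_empty_option with
  | of_equiv e ih =>
    intro a b h
    rw [← EquivLike.range_comp a e]
    exact ih _ b fun y hy => h y fun i => by simpa using hy (e.symm i)
  | h_empty =>
    intro a b h
    have hb : b ⬝ᵥ b ≤ 0 := by simpa using h (-b) (fun i => i.elim)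
    simp [dotProduct_self_eq_zero.mp
      (hb.antisymm (Finset.sum_nonneg fun i _ => mul_self_nonneg (b i)))]
  | h_option ih =>
    intro a b h
    by_cases hsome : ∀ y, (∀ i, 0 ≤ y ⬝ᵥ a (some i)) → 0 ≤ y ⬝ᵥ b
    · exact Submodule.span_mono (range_comp_subset_range some a) (ih _ b hsome)
    push Not at hsome
    obtain ⟨yh, hyh, hyb⟩ := hsome
    have hα : yh ⬝ᵥ a none < 0 := by
      by_contra! hα
      exact absurd (h yh fun | none => hα | some i => hyh i) (not_le.mpr hyb)
    set α := yh ⬝ᵥ a none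
    -- `π` projects along `a none` onto the hyperplane `yh = 0`; dually, `y ∘ π` is the
    -- functional `y - (y (a none) / α) • yh`, which vanishes on `a none`.
    let π v := v - (yh ⬝ᵥ v / α) • a none
    have hπ : ∀ y v, (y - (y ⬝ᵥ a none / α) • yh) ⬝ᵥ v = y ⬝ᵥ π v := by
      intro y v
      simp only [π, sub_dotProduct, dotProduct_sub, smul_dotProduct, dotProduct_smul, smul_eq_mul]
      ring
    have hπb : π b ∈ PointedCone.hull 𝕜 (range (π ∘ a ∘ some)) := by
      refine ih _ _ fun y hy => ?_
      rw [← hπ]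
      refine h _ fun | none => ?_ | some i => (hπ y _) ▸ hy i
      have hαα : yh ⬝ᵥ a none / α = 1 := div_self hα.ne
      simp [hπ, π, hαα]
    have hle : PointedCone.hull 𝕜 (range (π ∘ a ∘ some)) ≤
        PointedCone.hull 𝕜 (range (a ∘ some)) ⊔ Submodule.span 𝕜 {a none} := by
      rw [Submodule.span_le]
      rintro _ ⟨i, rfl⟩
      simp only [Function.comp_apply, π, sub_eq_add_neg, ← neg_smul]
      exact Submodule.add_mem_sup (Submodule.subset_span (mem_range_self i))
        (PointedCone.mem_ofSubmodule_iff.mpr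
          (Submodule.smul_mem _ _ (Submodule.mem_span_singleton_self (a none))))
    obtain ⟨w, hw, z, hz, hwz⟩ := Submodule.mem_sup.mp (hle hπb)
    obtain ⟨t, rfl⟩ := Submodule.mem_span_singleton.mp hz
    have hb : b = w + (t + yh ⬝ᵥ b / α) • a none := by
      rw [add_smul, ← add_assoc, hwz]
      simp [π]
    have hyw : 0 ≤ yh ⬝ᵥ w :=
      dotProduct_nonneg_of_mem_hull (by rintro _ ⟨i, rfl⟩; exact hyh i) hw
    have hs : 0 ≤ t + yh ⬝ᵥ b / α := by
      have := congrArg (yh ⬝ᵥ ·) hb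
      simp only [dotProduct_add, dotProduct_smul, smul_eq_mul] at this
      nlinarith
    rw [hb, Option.range_eq]
    exact add_mem (Submodule.span_mono (subset_insert _ _) hw)
      (PointedCone.smul_mem _ hs (Submodule.subset_span (mem_insert _ _)))

end Farkas

section PointedCone

theorem exists_irredundant_subset_span_eq {R E : Type*} [Semiring R] [AddCommMonoid E]
    [Module R E] [DecidableEq E] (G : Finset E) :
    ∃ G' ⊆ G, Submodule.span R (G' : Set E) = Submodule.span R G ∧
      ∀ g ∈ G', g ∉ Submodule.span R (G'.erase g : Set E) := by
  induction G using Finset.strongInduction with | H G ih =>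
  by_cases h : ∀ g ∈ G, g ∉ Submodule.span R (G.erase g : Set E)
  · exact ⟨G, subset_rfl, rfl, h⟩
  push Not at h
  obtain ⟨g, hg, hgmem⟩ := h
  obtain ⟨G', hsub, heq, hirr⟩ := ih (G.erase g) (Finset.erase_ssubset hg)
  refine ⟨G', hsub.trans (Finset.erase_subset g G), heq.trans ?_, hirr⟩
  rw [← Submodule.span_insert_eq_span hgmem, ← Finset.coe_insert, Finset.insert_erase hg]

variable {𝕜 E : Type*} [Field 𝕜] [LinearOrder 𝕜] [IsStrictOrderedRing 𝕜] [AddCommGroup E]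
  [Module 𝕜 E]

/-- In a pointed cone, a generator that is not redundant spans an extremal ray. -/
theorem exists_smul_eq_of_add_eq_smul {s : Set E} {g x y : E} {c : 𝕜}
    (hpt : (PointedCone.hull 𝕜 (insert g s) : Set E) ∩ -(PointedCone.hull 𝕜 (insert g s)) ⊆ {0})
    (hg : g ∉ PointedCone.hull 𝕜 s) (hx : x ∈ PointedCone.hull 𝕜 (insert g s))
    (hy : y ∈ PointedCone.hull 𝕜 (insert g s)) (hxy : x + y = c • g) :
    ∃ a : 𝕜, 0 ≤ a ∧ x = a • g := by
  set C := PointedCone.hull 𝕜 (insert g s)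
  have hsC : PointedCone.hull 𝕜 s ≤ C := Submodule.span_mono (subset_insert g s)
  obtain ⟨a, x', hx', rfl⟩ := Submodule.mem_span_insert.mp hx
  obtain ⟨b, y', hy', rfl⟩ := Submodule.mem_span_insert.mp hy
  have hsum : x' + y' = (c - a - b) • g := by
    rw [sub_smul, sub_smul, ← hxy, Nonneg.coe_smul, Nonneg.coe_smul]
    abel
  rcases lt_or_ge 0 (c - a - b) with hpos | hnonpos
  · exact absurd ((PointedCone.smul_mem_iff _ hpos).mp (hsum ▸ add_mem hx' hy')) hg
  have h0 : x' + y' = 0 := hpt ⟨hsC (add_mem hx' hy'), by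
    rw [Set.mem_neg, hsum, ← neg_smul]
    exact C.smul_mem (neg_nonneg.mpr hnonpos) (Submodule.subset_span (mem_insert g s))⟩
  have hx0 : x' = 0 :=
    hpt ⟨hsC hx', by rw [Set.mem_neg, neg_eq_of_add_eq_zero_right h0]; exact hsC hy'⟩
  exact ⟨a, a.2, by rw [hx0, add_zero]; rfl⟩

end PointedCone

theorem Finset.exists_nat_le_mul {𝕜 ι : Type*} [Field 𝕜] [LinearOrder 𝕜] [IsStrictOrderedRing 𝕜]
    [Archimedean 𝕜] (F : Finset ι) (f g : ι → 𝕜) (hg : ∀ i ∈ F, 0 < g i) :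
    ∃ k : ℕ, ∀ i ∈ F, f i ≤ k * g i := by
  obtain ⟨k, hk⟩ := exists_nat_ge (∑ i ∈ F, |f i / g i|)
  refine ⟨k, fun i hi => ?_⟩
  rw [← div_le_iff₀ (hg i hi)]
  exact (le_abs_self _).trans ((Finset.single_le_sum (fun j _ => abs_nonneg _) hi).trans hk)

section LatticeVectors

variable {n : ℕ}

theorem pairQ_eq_dotProduct (m p : Vec n) : pairQ m p = m ⬝ᵥ p := rfl

theorem pairQ_add_left (a b p : Vec n) : pairQ (a + b) p = pairQ a p + pairQ b p :=
  add_dotProduct a b p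

theorem toQ_add (a b : Fin n → ℤ) : toQ (a + b) = toQ a + toQ b := by
  ext i
  simp [toQ]

theorem coneHull_eq_hull (S : Set (Vec n)) : coneHull S = PointedCone.hull ℚ S := by
  ext x
  constructor
  · rintro ⟨G, c, hG, hc, rfl⟩
    exact sum_mem fun g hg => PointedCone.smul_mem _ (hc g) (Submodule.subset_span (hG hg))
  · intro hx
    obtain ⟨c, hcS, hc, rfl⟩ := PointedCone.mem_hull_set.mp hx
    exact ⟨c.support, c, hcS, hc, rfl⟩

theorem mem_dualCone_hull {S : Set (Vec n)} {m : Vec n} :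
    m ∈ dualCone (PointedCone.hull ℚ S) ↔ ∀ p ∈ S, 0 ≤ pairQ m p :=
  ⟨fun h p hp => h p (Submodule.subset_span hp), fun h _ hx => dotProduct_nonneg_of_mem_hull h hx⟩

theorem IsLatticeVec.exists_pairQ_eq {ν : Vec n} (hν : IsLatticeVec ν) (a : Fin n → ℤ) :
    ∃ z : ℤ, pairQ (toQ a) ν = z := by
  choose w hw using hν
  exact ⟨∑ i, a i * w i, by simp [pairQ, toQ, hw]⟩

theorem IsLatticeVec.one_le_pairQ {ν : Vec n} (hν : IsLatticeVec ν) {m : Fin n → ℤ}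
    (h0 : 0 ≤ pairQ (toQ m) ν) (hne : pairQ (toQ m) ν ≠ 0) : 1 ≤ pairQ (toQ m) ν := by
  obtain ⟨k, hk⟩ := hν.exists_pairQ_eq m
  rw [hk] at h0 hne ⊢
  exact_mod_cast (lt_of_le_of_ne (by exact_mod_cast h0) (by exact_mod_cast hne.symm) : 0 < k)

theorem exists_toQ_eq_nsmul (m : Vec n) : ∃ N : ℕ, 0 < N ∧ ∃ w : Fin n → ℤ, toQ w = N • m := by
  refine ⟨∏ i, (m i).den, Finset.prod_pos fun i _ => (m i).den_pos,
    fun i => (∏ j ∈ Finset.univ.erase i, (m j).den : ℕ) * (m i).num, ?_⟩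
  ext i
  rw [← Finset.mul_prod_erase _ _ (Finset.mem_univ i)]
  simp only [toQ, Pi.smul_apply, nsmul_eq_mul]
  push_cast
  rw [← Rat.mul_den_eq_num]
  ring

theorem IsLatticeVec.exists_primitive_smul {g : Vec n} (hg : IsLatticeVec g) (hg0 : g ≠ 0) :
    ∃ t : ℚ, 0 < t ∧ IsLatticeVec (t • g) ∧
      ∀ c : ℚ, 0 < c → IsLatticeVec (c • t • g) → 1 ≤ c := by
  classical
  obtain ⟨i, hi⟩ : ∃ i, g i ≠ 0 := by
    by_contra! h
    exact hg0 (funext h)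
  -- minimise the integer `|(t • g) i|` over the lattice multiples `t • g`
  have hP : ∀ t : ℚ, IsLatticeVec (t • g) → ∃ k : ℕ, |t| * |g i| = k := by
    intro t ht
    obtain ⟨z, hz⟩ := ht i
    refine ⟨z.natAbs, ?_⟩
    rw [← abs_mul, Nat.cast_natAbs, Int.cast_abs, ← hz, Pi.smul_apply, smul_eq_mul]
  have hex : ∃ k : ℕ, ∃ t : ℚ, 0 < t ∧ IsLatticeVec (t • g) ∧ |t| * |g i| = k := by
    obtain ⟨k, hk⟩ := hP 1 (by simpa using hg)
    exact ⟨k, 1, one_pos, by simpa using hg, hk⟩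
  obtain ⟨t, ht, hlat, hk⟩ := Nat.find_spec hex
  refine ⟨t, ht, hlat, fun c hc hclat => ?_⟩
  rw [smul_smul] at hclat
  obtain ⟨k, hk'⟩ := hP _ hclat
  have hmin : (Nat.find hex : ℚ) ≤ k := by
    exact_mod_cast Nat.find_min' hex ⟨c * t, mul_pos hc ht, hclat, hk'⟩
  rw [← hk, ← hk', abs_mul, abs_of_pos hc, abs_of_pos ht, mul_assoc] at hmin
  exact le_of_mul_le_mul_right (by simpa using hmin) (mul_pos ht (abs_pos.mpr hi))

end LatticeVectors

namespace IsExtremalRay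

variable {n : ℕ} {σ ρ ρ' : Set (Vec n)} {ν ν' : Vec n} {G : Finset (Vec n)}

theorem mem_iff (hρ : IsExtremalRay σ ρ ν) {x : Vec n} :
    x ∈ ρ ↔ ∃ c : ℚ, 0 ≤ c ∧ x = c • ν := by
  rw [hρ.2.2.2.1]
  rfl

theorem subset (hρ : IsExtremalRay σ ρ ν) : ρ ⊆ σ := hρ.2.2.2.2.1

theorem mem_of_add_mem (hρ : IsExtremalRay σ ρ ν) {x y : Vec n} (hx : x ∈ σ) (hy : y ∈ σ)
    (hxy : x + y ∈ ρ) : x ∈ ρ :=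
  hρ.2.2.2.2.2 x hx y hy hxy

theorem generator_mem (hρ : IsExtremalRay σ ρ ν) : ν ∈ σ :=
  hρ.subset (hρ.mem_iff.mpr ⟨1, zero_le_one, (one_smul ℚ ν).symm⟩)

/-- Primitivity forces the two generators to agree. -/
theorem eq_of_mem (hρ : IsExtremalRay σ ρ ν) (hρ' : IsExtremalRay σ ρ' ν') (h : ν ∈ ρ') :
    ρ = ρ' := by
  obtain ⟨hlat, hν0, hprim, hρeq, -, -⟩ := hρ
  obtain ⟨hlat', -, hprim', hρ'eq, -, -⟩ := hρ'
  obtain ⟨c, hc, rfl⟩ := hρ'eq ▸ h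
  have hc0 : 0 < c := hc.lt_of_ne (by rintro rfl; simp at hν0)
  have hc1 : 1 ≤ c⁻¹ :=
    hprim c⁻¹ (inv_pos.mpr hc0) (by rwa [smul_smul, inv_mul_cancel₀ hc0.ne', one_smul])
  obtain rfl : c = 1 := le_antisymm ((one_le_inv₀ hc0).mp hc1) (hprim' c hc0 hlat)
  rw [hρeq, hρ'eq, one_smul]

theorem exists_dual_pos (hσ : σ = PointedCone.hull ℚ (G : Set (Vec n)))
    (hρ : IsExtremalRay σ ρ ν) {x : Vec n} (hx : x ∈ σ) (hxρ : x ∉ ρ) :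
    ∃ m ∈ dualCone σ, pairQ m ν = 0 ∧ 0 < pairQ m x := by
  -- otherwise Farkas' lemma writes `x + s = t • ν` with `s ∈ σ`, and extremality puts `x` in `ρ`
  by_contra! h
  have hfar := mem_hull_of_forall_dotProduct_nonneg
    (fun v : ↥(insert (-ν) (G : Set (Vec n))) => (v : Vec n)) (-x) ?_
  · rw [Subtype.range_coe] at hfar
    obtain ⟨t, s, hs, hxs⟩ := Submodule.mem_span_insert.mp hfar
    refine hxρ (hρ.mem_of_add_mem hx (by rw [hσ]; exact hs) (hρ.mem_iff.mpr ⟨t, t.2, ?_⟩))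
    rw [← neg_neg x, hxs, ← Nonneg.coe_smul]
    simp
  · intro y hy
    have hyσ : y ∈ dualCone σ :=
      hσ ▸ mem_dualCone_hull.mpr fun p hp => hy ⟨p, mem_insert_of_mem _ hp⟩
    have hyν : pairQ y ν = 0 :=
      le_antisymm (by simpa [pairQ_eq_dotProduct] using hy ⟨-ν, mem_insert _ _⟩)
        (hyσ ν hρ.generator_mem)
    simpa [pairQ_eq_dotProduct] using h y hyσ hyν

theorem exists_dual_pos_of_finset (hσ : σ = PointedCone.hull ℚ (G : Set (Vec n)))
    (hρ : IsExtremalRay σ ρ ν) (F : Finset (Vec n)) (hF : ∀ x ∈ F, x ∈ σ ∧ x ∉ ρ) :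
    ∃ m ∈ dualCone σ, pairQ m ν = 0 ∧ ∀ x ∈ F, 0 < pairQ m x := by
  classical
  induction F using Finset.induction_on with
  | empty => exact ⟨0, fun p _ => by simp [pairQ], by simp [pairQ], by simp⟩
  | insert x F _ ih =>
    obtain ⟨m, hm, hmν, hmF⟩ := ih fun y hy => hF y (Finset.mem_insert_of_mem hy)
    obtain ⟨hxσ, hxρ⟩ := hF x (Finset.mem_insert_self x F)
    obtain ⟨m', hm', hm'ν, hm'x⟩ := hρ.exists_dual_pos hσ hxσ hxρ
    refine ⟨m + m', fun p hp => ?_, ?_, fun y hy => ?_⟩ <;> rw [pairQ_add_left]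
    · exact add_nonneg (hm p hp) (hm' p hp)
    · rw [hmν, hm'ν, add_zero]
    · rcases Finset.mem_insert.mp hy with rfl | hy
      · exact add_pos_of_nonneg_of_pos (hm y hxσ) hm'x
      · exact add_pos_of_pos_of_nonneg (hmF y hy) (hm' y (hF y (Finset.mem_insert_of_mem hy)).1)

theorem exists_lattice_dual_pos_of_finset (hσ : σ = PointedCone.hull ℚ (G : Set (Vec n)))
    (hρ : IsExtremalRay σ ρ ν) (F : Finset (Vec n)) (hF : ∀ x ∈ F, x ∈ σ ∧ x ∉ ρ) :
    ∃ w : Fin n → ℤ, toQ w ∈ dualCone σ ∧ pairQ (toQ w) ν = 0 ∧ ∀ x ∈ F, 0 < pairQ (toQ w) x := by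
  obtain ⟨m, hm, hmν, hmF⟩ := hρ.exists_dual_pos_of_finset hσ F hF
  obtain ⟨N, hN, w, hw⟩ := exists_toQ_eq_nsmul m
  have hwp : ∀ p, pairQ (toQ w) p = N * pairQ m p := fun p => by
    rw [hw, pairQ_eq_dotProduct, smul_dotProduct, nsmul_eq_mul]
    rfl
  refine ⟨w, fun p hp => ?_, ?_, fun x hx => ?_⟩ <;> rw [hwp]
  · exact mul_nonneg (Nat.cast_nonneg N) (hm p hp)
  · rw [hmν, mul_zero]
  · exact mul_pos (Nat.cast_pos.mpr hN) (hmF x hx)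

/-- A lattice point `μ + k w` of `σ^∨`, where `w` exposes `ρ` and `k` is large. -/
theorem exists_lattice_dual_pairQ_eq_one (hσ : σ = PointedCone.hull ℚ (G : Set (Vec n)))
    (hρ : IsExtremalRay σ ρ ν) {μ : Fin n → ℤ} (hμ : pairQ (toQ μ) ν = 1) :
    ∃ m : Fin n → ℤ, toQ m ∈ dualCone σ ∧ pairQ (toQ m) ν = 1 := by
  classical
  obtain ⟨w, -, hwν, hwF⟩ := hρ.exists_lattice_dual_pos_of_finset hσ (G.filter (· ∉ ρ))
    fun g hg => ⟨hσ ▸ Submodule.subset_span (Finset.mem_filter.mp hg).1,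
      (Finset.mem_filter.mp hg).2⟩
  obtain ⟨k, hk⟩ := (G.filter (· ∉ ρ)).exists_nat_le_mul (fun g => -pairQ (toQ μ) g) _ hwF
  have hpair : ∀ p, pairQ (toQ (μ + k • w)) p = pairQ (toQ μ) p + k * pairQ (toQ w) p := by
    intro p
    simp [pairQ, toQ, Finset.sum_add_distrib, Finset.mul_sum, add_mul, mul_assoc]
  refine ⟨μ + k • w, ?_, by rw [hpair, hμ, hwν, mul_zero, add_zero]⟩
  rw [hσ, mem_dualCone_hull]
  intro g hg
  rw [hpair]
  by_cases hgρ : g ∈ ρ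
  · obtain ⟨c, hc, rfl⟩ := hρ.mem_iff.mp hgρ
    simp only [pairQ_eq_dotProduct, dotProduct_smul, smul_eq_mul] at hμ hwν ⊢
    rw [hμ, hwν]
    simpa using hc
  · linarith [hk g (Finset.mem_filter.mpr ⟨hg, hgρ⟩)]

end IsExtremalRay

section Decomposition

variable {n : ℕ} {σ ρ : Set (Vec n)} {ν : Vec n} {G : Finset (Vec n)}

def otherRays (σ ρ : Set (Vec n)) : Set (Vec n) :=
  {x | ∃ (ρ' : Set (Vec n)) (ν' : Vec n), IsExtremalRay σ ρ' ν' ∧ ρ' ≠ ρ ∧ x ∈ ρ'}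

theorem exists_isExtremalRay_mem (hσ : σ = PointedCone.hull ℚ (G : Set (Vec n)))
    (hpt : PointedCone' σ) {g : Vec n} (hg : g ∈ G)
    (hirr : g ∉ PointedCone.hull ℚ (G.erase g : Set (Vec n))) (hlat : IsLatticeVec g) :
    ∃ ρ' ν', IsExtremalRay σ ρ' ν' ∧ g ∈ ρ' := by
  have hg0 : g ≠ 0 := by
    rintro rfl
    exact hirr (zero_mem _)
  obtain ⟨t, ht, hlat', hprim⟩ := hlat.exists_primitive_smul hg0
  have hGg : (G : Set (Vec n)) = insert g ↑(G.erase g) := by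
    rw [Finset.coe_erase, insert_sdiff_singleton, insert_eq_of_mem (Finset.mem_coe.mpr hg)]
  refine ⟨{x | ∃ c : ℚ, 0 ≤ c ∧ x = c • t • g}, t • g,
    ⟨hlat', smul_ne_zero ht.ne' hg0, hprim, rfl, ?_, ?_⟩,
    t⁻¹, inv_nonneg.mpr ht.le, by rw [smul_smul, inv_mul_cancel₀ ht.ne', one_smul]⟩
  · rintro _ ⟨c, hc, rfl⟩
    rw [hσ]
    exact PointedCone.smul_mem _ hc (PointedCone.smul_mem _ ht.le (Submodule.subset_span hg))
  · rintro x hx y hy ⟨c, -, hxy⟩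
    rw [hσ, hGg] at hx hy hpt
    obtain ⟨a, ha, rfl⟩ :=
      exists_smul_eq_of_add_eq_smul hpt hirr hx hy (c := c * t) (by rw [hxy, smul_smul])
    exact ⟨a / t, div_nonneg ha ht.le, by rw [smul_smul, div_mul_cancel₀ a ht.ne']⟩

/-- Every irredundant generator of `σ` spans an extremal ray. -/
theorem subset_hull_insert_of_isExtremalRay (hσ : σ = PointedCone.hull ℚ (G : Set (Vec n)))
    (hG : ∀ g ∈ G, IsLatticeVec g) (hpt : PointedCone' σ) (hρ : IsExtremalRay σ ρ ν) :
    σ ⊆ PointedCone.hull ℚ (insert ν (otherRays σ ρ)) := by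
  classical
  obtain ⟨G', hG'G, hspan, hirr⟩ := exists_irredundant_subset_span_eq (R := {c : ℚ // 0 ≤ c}) G
  have hσ' : σ = PointedCone.hull ℚ (G' : Set (Vec n)) :=
    hσ.trans (congrArg SetLike.coe hspan.symm)
  suffices (PointedCone.hull ℚ (G' : Set (Vec n)) : Set (Vec n)) ⊆
      PointedCone.hull ℚ (insert ν (otherRays σ ρ)) by
    rwa [← hσ'] at this
  rw [SetLike.coe_subset_coe, Submodule.span_le]
  intro g hg
  obtain ⟨ρ', ν', hρ', hgρ'⟩ := exists_isExtremalRay_mem hσ' hpt hg (hirr g hg) (hG g (hG'G hg))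
  by_cases h : ρ' = ρ
  · obtain ⟨c, hc, rfl⟩ := hρ.mem_iff.mp (h ▸ hgρ')
    exact PointedCone.smul_mem _ hc (Submodule.subset_span (mem_insert _ _))
  · exact Submodule.subset_span (mem_insert_of_mem _ ⟨ρ', ν', hρ', h, hgρ'⟩)

end Decomposition

section Characterization

variable {n : ℕ} {σ R : Set (Vec n)} {ν : Vec n}

theorem add_mem_dualCone_of_subset_hull_insert (hσ : σ ⊆ PointedCone.hull ℚ (insert ν R))
    (hRσ : R ⊆ σ) {m e : Vec n} (hm : m ∈ dualCone σ) (he : e ∈ dualCone (PointedCone.hull ℚ R))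
    (hν : 0 ≤ pairQ m ν + pairQ e ν) : m + e ∈ dualCone σ := by
  intro x hx
  obtain ⟨a, z, hz, rfl⟩ := Submodule.mem_span_insert.mp (hσ hx)
  have hmz : 0 ≤ pairQ m z := dotProduct_nonneg_of_mem_hull (fun p hp => hm p (hRσ hp)) hz
  have hez : 0 ≤ pairQ e z := he z hz
  simp only [pairQ_eq_dotProduct, ← Nonneg.coe_smul, add_dotProduct, dotProduct_add,
    dotProduct_smul, smul_eq_mul] at *
  nlinarith [a.2]

theorem mem_dualCone_and_pairQ_eq_neg_one_iff (hν : IsLatticeVec ν) (hνσ : ν ∈ σ)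
    (hσ : σ ⊆ PointedCone.hull ℚ (insert ν R)) (hRσ : R ⊆ σ)
    (hunit : ∃ m : Fin n → ℤ, toQ m ∈ dualCone σ ∧ pairQ (toQ m) ν = 1)
    (hR : ∀ x ∈ R, ∃ m : Fin n → ℤ,
      toQ m ∈ dualCone σ ∧ pairQ (toQ m) x = 0 ∧ pairQ (toQ m) ν ≠ 0)
    (e : Fin n → ℤ) :
    (toQ e ∈ dualCone (PointedCone.hull ℚ R) ∧ pairQ (toQ e) ν = -1) ↔
      (toQ e ∉ dualCone σ ∧ ∀ m : Fin n → ℤ, toQ m ∈ dualCone σ → pairQ (toQ m) ν ≠ 0 →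
        toQ (m + e) ∈ dualCone σ) := by
  constructor
  · rintro ⟨he, heν⟩
    refine ⟨fun h => by linarith [h ν hνσ], fun m hm hmν => ?_⟩
    rw [toQ_add]
    exact add_mem_dualCone_of_subset_hull_insert hσ hRσ hm he
      (by linarith [hν.one_le_pairQ (hm ν hνσ) hmν])
  · rintro ⟨hne, hall⟩
    have he : toQ e ∈ dualCone (PointedCone.hull ℚ R) := mem_dualCone_hull.mpr fun x hx => by
      obtain ⟨m, hm, hmx, hmν⟩ := hR x hx
      simpa [toQ_add, pairQ_add_left, hmx] using hall m hm hmν x (hRσ hx)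
    obtain ⟨m, hm, hmν⟩ := hunit
    have hge : -1 ≤ pairQ (toQ e) ν := by
      have := hall m hm (by rw [hmν]; exact one_ne_zero) ν hνσ
      rw [toQ_add, pairQ_add_left, hmν] at this
      linarith
    have hlt : pairQ (toQ e) ν < 0 := by
      by_contra! h
      exact hne (zero_add (toQ e) ▸ add_mem_dualCone_of_subset_hull_insert hσ hRσ
        (fun p _ => by simp [pairQ]) he (by simpa [pairQ] using h))
    obtain ⟨z, hz⟩ := hν.exists_pairQ_eq e
    rw [hz] at hge hlt ⊢
    have : z = -1 := by
      have h1 : (-1 : ℤ) ≤ z := by exact_mod_cast hge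
      have h2 : z < 0 := by exact_mod_cast hlt
      omega
    exact ⟨he, by simp [this]⟩

end Characterization

theorem stmt5_general {n : ℕ} (σ ρ σ₁ : Set (Vec n)) (ν : Vec n) (μ : Fin n → ℤ)
    (hσ : IsRatPolyCone σ) (hpt : PointedCone' σ)
    (hρ : IsExtremalRay σ ρ ν)
    (hμ : pairQ (toQ μ) ν = 1)
    (hσ₁ : σ₁ = coneHull {x | ∃ (ρ' : Set (Vec n)) (ν' : Vec n),
      IsExtremalRay σ ρ' ν' ∧ ρ' ≠ ρ ∧ x ∈ ρ'})
    (e : Fin n → ℤ) :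
    (toQ e ∈ dualCone σ₁ ∧ pairQ (toQ e + toQ μ) ν = 0) ↔
      (toQ e ∉ dualCone σ ∧
        ∀ m : Fin n → ℤ, toQ m ∈ dualCone σ → pairQ (toQ m) ν ≠ 0 →
          toQ (m + e) ∈ dualCone σ) := by
  obtain ⟨G, hG, hσG⟩ := hσ
  rw [coneHull_eq_hull] at hσG hσ₁
  have heμ : pairQ (toQ e + toQ μ) ν = 0 ↔ pairQ (toQ e) ν = -1 := by
    rw [pairQ_add_left, hμ]
    constructor <;> intro h <;> linarith
  rw [hσ₁, heμ]
  refine mem_dualCone_and_pairQ_eq_neg_one_iff hρ.1 hρ.generator_mem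
    (subset_hull_insert_of_isExtremalRay hσG hG hpt hρ) (fun x ⟨_, _, hρ', _, hx⟩ => hρ'.subset hx)
    (hρ.exists_lattice_dual_pairQ_eq_one hσG hμ) ?_ e
  rintro x ⟨ρ', ν', hρ', hne, hx⟩
  obtain ⟨w, hw, hwν', hwν⟩ := hρ'.exists_lattice_dual_pos_of_finset hσG {ν}
    (by simpa using ⟨hρ.generator_mem, fun h => hne (hρ.eq_of_mem hρ' h).symm⟩)
  obtain ⟨c, -, rfl⟩ := hρ'.mem_iff.mp hx
  refine ⟨w, hw, ?_, (hwν ν (Finset.mem_singleton_self ν)).ne'⟩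
  rw [pairQ_eq_dotProduct, dotProduct_smul, ← pairQ_eq_dotProduct, hwν', smul_zero]

/-- Lemma 2.6 (convex-core): characterization of the set `S_ρ`.  Here `σ ⊆ N_ℚ` is a
pointed full-dimensional rational polyhedral cone, `ρ` the extremal ray generated by the
primitive lattice vector `ν`, `τ = σ^∨ ∩ ρ^⊥` the dual facet, `σ₁` the cone spanned by the
remaining extremal rays, `μ` a lattice vector with `⟨μ, ν⟩ = 1`, and
`S_ρ = σ₁^∨ ∩ (H - μ) ∩ M` where `H = {m : ⟨m, ν⟩ = 0}`.  Then `e ∈ S_ρ` iff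
`e ∉ σ^∨ ∩ M` and `m + e ∈ σ^∨ ∩ M` for all `m ∈ (σ^∨ ∩ M) \ (τ ∩ M)`. -/
theorem stmt5 {n : ℕ} (σ ρ σ₁ : Set (Vec n)) (ν : Vec n) (μ : Fin n → ℤ)
    (hσ : IsRatPolyCone σ) (hpt : PointedCone' σ) (hfull : FullDim σ)
    (hρ : IsExtremalRay σ ρ ν)
    (hμ : pairQ (toQ μ) ν = 1)
    (hσ₁ : σ₁ = coneHull {x | ∃ (ρ' : Set (Vec n)) (ν' : Vec n),
      IsExtremalRay σ ρ' ν' ∧ ρ' ≠ ρ ∧ x ∈ ρ'})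
    (e : Fin n → ℤ) :
    (toQ e ∈ dualCone σ₁ ∧ pairQ (toQ e + toQ μ) ν = 0) ↔
      (toQ e ∉ dualCone σ ∧
        ∀ m : Fin n → ℤ, toQ m ∈ dualCone σ → pairQ (toQ m) ν ≠ 0 →
          toQ (m + e) ∈ dualCone σ) :=
  stmt5_general σ ρ σ₁ ν μ hσ hpt hρ hμ hσ₁ e
end
end

section
/- Let K be a field of characteristic 0, σ a pointed full-dimensional rational polyhedral cone in N_ℚ, and A = K[σ^∨ ∩ M] the affine semigroup algebra. For every extremal ray ρ of σ with primitive generator ν and every e ∈ S_ρ, the K-linear map ∂ determined on monomials by ∂(χ^m) = ⟨m, ν⟩ χ^{m+e} is a well-defined derivation of A that is locally nilpotent, and its kernel is the semigroup subalgebra K[τ ∩ M], where τ = σ^∨ ∩ ρ^⊥. -/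
open scoped BigOperators Pointwise

noncomputable section

/-!
Write `w = ⟨·, ν⟩`, an additive map `M → ℚ` that is nonnegative on `S = σ^∨ ∩ M` since
`ν ∈ σ`. On monomials `∂` is `χ^s ↦ w(s) χ^{s+e}`, and the Leibniz rule reduces to
`w(s + t) = w(s) + w(t)`; nonnegativity of `w` guarantees `s + t + e ∈ S` as soon as one of
`w(s)`, `w(t)` is nonzero. If `⟨e, ν⟩ ≥ 0`, then from any `m ∈ S` with `w(m) ≠ 0` the hypothesis
on `e` gives `m + k e ∈ σ^∨` for all `k`, hence `e ∈ σ^∨`, which is excluded. So `⟨e, ν⟩ < 0`,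
each application of `∂` lowers `w` by the fixed amount `-⟨e, ν⟩`, and `∂` is locally nilpotent
because `w ≥ 0` on `S`. Finally `s ↦ s + e` is injective, so the coefficient of `∂x` at `s + e`
is `w(s)` times that of `x` at `s`: `∂x = 0` iff `x` is supported on `{w = 0} = τ ∩ M`.
-/

open AddMonoidAlgebra

lemma AddMonoidAlgebra.leibniz_of_single {R M : Type*} [CommSemiring R] [AddCommMonoid M]
    (D : R[M] →ₗ[R] R[M])
    (h : ∀ s t : M,
      D (single (s + t) 1) = single s 1 * D (single t 1) + single t 1 * D (single s 1))
    (a b : R[M]) : D (a * b) = a • D b + b • D a := by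
  induction a using induction_linear with
  | zero => simp
  | add a a' ha ha' => simp only [add_mul, map_add, ha, ha', add_smul, smul_add]; abel
  | single s c =>
    induction b using induction_linear with
    | zero => simp
    | add b b' hb hb' => simp only [mul_add, map_add, hb, hb', add_smul, smul_add]; abel
    | single t d =>
      have hsingle : ∀ (u : M) (c : R), single u c = c • single u 1 := fun u c => by
        rw [smul_single', mul_one]
      rw [single_mul_single, hsingle s, hsingle t, hsingle (s + t), map_smul, map_smul, map_smul, h]
      simp only [smul_eq_mul, smul_add, Algebra.smul_mul_assoc, Algebra.mul_smul_comm, mul_smul]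
      rw [smul_comm c d]

section WeightShift

variable {K G : Type*} [Field K] [CharZero K] [AddCommGroup G]
  (S : AddSubmonoid G) (w : G →+ ℚ) (e : G) (hshift : ∀ s ∈ S, w s ≠ 0 → s + e ∈ S)

/-- `s ↦ s + e`, extended by the identity where `w` vanishes (there the derivation kills `χ^s`
anyway). -/
def weightShift (s : S) : S :=
  if h : w s = 0 then s else ⟨s + e, hshift s s.2 h⟩

variable {S w e hshift}

lemma coe_weightShift {s : S} (h : w s ≠ 0) : (weightShift S w e hshift s : G) = s + e := by
  simp [weightShift, h]

lemma weightShift_injOn : Set.InjOn (weightShift S w e hshift) {s | w s ≠ 0} := by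
  intro s hs t ht h
  have := congrArg Subtype.val h
  rw [coe_weightShift hs, coe_weightShift ht] at this
  exact Subtype.ext (add_right_cancel this)

lemma weight_weightShift {s : S} (h : w s ≠ 0) :
    w (weightShift S w e hshift s) = w s + w e := by
  rw [coe_weightShift h, map_add]

lemma weightShift_add {s t : S} (hw : ∀ s ∈ S, 0 ≤ w s) (hs : w s ≠ 0) :
    weightShift S w e hshift (s + t) = t + weightShift S w e hshift s := by
  have hst : w (s + t : S) ≠ 0 := by
    have := hw t t.2
    have := (hw s s.2).lt_of_ne' hs
    rw [AddSubmonoid.coe_add, map_add]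
    positivity
  apply Subtype.ext
  rw [AddSubmonoid.coe_add, coe_weightShift hst, AddSubmonoid.coe_add, coe_weightShift hs]
  abel

lemma add_nsmul_mem_of_weight_nonneg (hshift : ∀ s ∈ S, w s ≠ 0 → s + e ∈ S)
    (hw : ∀ s ∈ S, 0 ≤ w s) (hwe : 0 ≤ w e) {s : G} (hs : s ∈ S) (hws : w s ≠ 0)
    (k : ℕ) :
    s + k • e ∈ S := by
  induction k with
  | zero => simpa using hs
  | succ k ih =>
    have hpos : 0 < w (s + k • e) := by
      have := (hw s hs).lt_of_ne' hws
      rw [map_add, map_nsmul]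
      positivity
    rw [succ_nsmul, ← add_assoc]
    exact hshift _ ih hpos.ne'

variable (K S w e hshift)

def weightShiftLinearMap : K[S] →ₗ[K] K[S] :=
  Finsupp.lsum K
      (fun s : S => algebraMap ℚ K (w s) • lsingle (weightShift S w e hshift s)) ∘ₗ
    (coeffLinearEquiv K).toLinearMap

variable {K S w e hshift}

lemma weightShiftLinearMap_single (s : S) (c : K) :
    weightShiftLinearMap K S w e hshift (single s c) =
      algebraMap ℚ K (w s) • single (weightShift S w e hshift s) c := by
  show Finsupp.lsum K _ (Finsupp.single s c) = _
  rw [Finsupp.lsum_single]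
  rfl

lemma smul_single_weightShift_add (hw : ∀ s ∈ S, 0 ≤ w s) (s t : S) (c : K) :
    algebraMap ℚ K (w s) • single (weightShift S w e hshift (s + t)) c =
      algebraMap ℚ K (w s) • single (t + weightShift S w e hshift s) c := by
  by_cases hs : w s = 0
  · simp [hs]
  · rw [weightShift_add hw hs]

variable (K S w e hshift) in
def weightShiftDerivation (hw : ∀ s ∈ S, 0 ≤ w s) : Derivation K K[S] K[S] where
  toLinearMap := weightShiftLinearMap K S w e hshift
  map_one_eq_zero' := by
    rw [one_def, weightShiftLinearMap_single]
    simp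
  leibniz' := by
    refine leibniz_of_single _ fun s t => ?_
    rw [weightShiftLinearMap_single, weightShiftLinearMap_single, weightShiftLinearMap_single,
      AddSubmonoid.coe_add, map_add, map_add, add_smul, smul_single_weightShift_add hw,
      add_comm s t, smul_single_weightShift_add hw, mul_smul_comm, mul_smul_comm,
      single_mul_single, single_mul_single, mul_one, add_comm]

variable {hw : ∀ s ∈ S, 0 ≤ w s}

lemma weightShiftDerivation_single (s : S) (c : K) :
    weightShiftDerivation K S w e hshift hw (single s c) =
      algebraMap ℚ K (w s) • single (weightShift S w e hshift s) c :=
  weightShiftLinearMap_single s c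

lemma weightShiftDerivation_single_of_weight_eq_zero {s : S} (hs : w s = 0) (c : K) :
    weightShiftDerivation K S w e hshift hw (single s c) = 0 := by
  simp [weightShiftDerivation_single, hs]

lemma weightShiftDerivation_single_of_coe_eq_add {s t : S} (hst : (t : G) = s + e) (c : K) :
    weightShiftDerivation K S w e hshift hw (single s c) =
      algebraMap ℚ K (w s) • single t c := by
  by_cases hs : w s = 0
  · simp [weightShiftDerivation_single, hs]
  · rw [weightShiftDerivation_single, Subtype.ext ((coe_weightShift hs).trans hst.symm)]

lemma iterate_weightShiftDerivation_single (k : ℕ) :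
    ∀ (s : S) (c : K), w s < k * -w e →
      (⇑(weightShiftDerivation K S w e hshift hw))^[k] (single s c) = 0 := by
  induction k with
  | zero => exact fun s c hs => absurd (hw s s.2) (by simpa using hs)
  | succ k ih =>
    intro s c hs
    rw [Function.iterate_succ_apply]
    by_cases hs0 : w s = 0
    · rw [weightShiftDerivation_single_of_weight_eq_zero hs0, iterate_map_zero]
    · rw [weightShiftDerivation_single, smul_single]
      refine ih _ _ ?_
      rw [weight_weightShift hs0]
      push_cast at hs
      linarith

lemma isLND_weightShiftDerivation
    (hwe : ∀ s ∈ S, w s ≠ 0 → w e < 0) :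
    IsLND (weightShiftDerivation K S w e hshift hw) := by
  set D := weightShiftDerivation K S w e hshift hw
  suffices h : ∀ a, a ∈ Module.End.maxGenEigenspace (D : Module.End K K[S]) 0 by
    intro a
    simpa [Module.End.coe_pow] using h a
  intro a
  induction a using induction_linear with
  | zero => exact zero_mem _
  | add a b ha hb => exact add_mem ha hb
  | single s c =>
    rw [Module.End.mem_maxGenEigenspace]
    simp only [zero_smul, sub_zero, Module.End.coe_pow]
    by_cases hs : w s = 0
    · exact ⟨1, weightShiftDerivation_single_of_weight_eq_zero hs c⟩
    · have he : 0 < -w e := neg_pos.2 (hwe s s.2 hs)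
      obtain ⟨k, hk⟩ := exists_nat_gt (w s / -w e)
      exact ⟨k, iterate_weightShiftDerivation_single k s c ((div_lt_iff₀ he).1 hk)⟩

lemma coeff_weightShiftDerivation_weightShift (x : K[S]) {s : S}
    (hs : w s ≠ 0) :
    (weightShiftDerivation K S w e hshift hw x).coeff (weightShift S w e hshift s) =
      algebraMap ℚ K (w s) * x.coeff s := by
  induction x using induction_linear with
  | zero => simp
  | add x y hx hy => simp only [map_add, coeff_add, Finsupp.add_apply, hx, hy, mul_add]
  | single t c =>
    rw [weightShiftDerivation_single, coeff_smul_apply, coeff_single, coeff_single]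
    by_cases hts : t = s
    · subst hts
      simp
    by_cases ht : w t = 0
    · simp [ht, hts]
    · have : weightShift S w e hshift t ≠ weightShift S w e hshift s :=
        fun h => hts (weightShift_injOn ht hs h)
      simp [this, hts]

lemma weightShiftDerivation_eq_zero_iff (x : K[S]) :
    weightShiftDerivation K S w e hshift hw x = 0 ↔
      x ∈ Submodule.span K ((fun s : S => single s (1 : K)) '' {s | w s = 0}) := by
  constructor
  · intro hx
    rw [← supported_eq_span_single, mem_supported']
    intro s hs
    have := coeff_weightShiftDerivation_weightShift (hshift := hshift) (hw := hw) x hs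
    rw [hx] at this
    exact (mul_eq_zero.1 this.symm).resolve_left ((map_ne_zero _).2 hs)
  · refine fun hx => (Submodule.span_le (p := LinearMap.ker
      (weightShiftDerivation K S w e hshift hw).toLinearMap)).2 ?_ hx
    rintro _ ⟨s, hs, rfl⟩
    exact weightShiftDerivation_single_of_weight_eq_zero hs 1

end WeightShift

section DualCone

variable {n : ℕ}

lemma toQ_add_nsmul (m v : Fin n → ℤ) (k : ℕ) : toQ (m + k • v) = toQ m + k • toQ v := by
  funext i
  simp [toQ]

def pairingHom (ν : Vec n) : (Fin n → ℤ) →+ ℚ where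
  toFun m := pairQ (toQ m) ν
  map_zero' := by simp [pairQ, toQ]
  map_add' a b := by simp [pairQ, toQ, add_mul, Finset.sum_add_distrib]

@[simp]
lemma pairingHom_apply (ν : Vec n) (m : Fin n → ℤ) : pairingHom ν m = pairQ (toQ m) ν := rfl

lemma mem_dualCone_of_forall_add_nsmul_mem {σ : Set (Vec n)} {x v : Vec n}
    (h : ∀ k : ℕ, x + k • v ∈ dualCone σ) : v ∈ dualCone σ := by
  intro p hp
  by_contra! hv
  obtain ⟨k, hk⟩ := exists_nat_gt (pairQ x p / -pairQ v p)
  rw [div_lt_iff₀ (neg_pos.2 hv)] at hk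
  have hpair : pairQ (x + k • v) p = pairQ x p + k * pairQ v p := by
    simp [pairQ, add_mul, Finset.sum_add_distrib, Finset.mul_sum, mul_assoc]
  have := h k p hp
  linarith

lemma IsExtremalRay.generator_mem_s7 {σ ρ : Set (Vec n)} {ν : Vec n} (h : IsExtremalRay σ ρ ν) :
    ν ∈ σ := by
  obtain ⟨-, -, -, rfl, hρσ, -⟩ := h
  exact hρσ ⟨1, zero_le_one, (one_smul ℚ ν).symm⟩

variable {σ : Set (Vec n)} {ν : Vec n}

lemma pairingHom_nonneg (hν : ν ∈ σ) : ∀ m ∈ latticeCone σ, 0 ≤ pairingHom ν m :=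
  fun _ hm => hm ν hν

lemma pairingHom_lt_zero_of_notMem_dualCone {e : Fin n → ℤ} (hν : ν ∈ σ)
    (he₁ : toQ e ∉ dualCone σ)
    (he₂ : ∀ m ∈ latticeCone σ, pairingHom ν m ≠ 0 → m + e ∈ latticeCone σ) :
    ∀ m ∈ latticeCone σ, pairingHom ν m ≠ 0 → pairingHom ν e < 0 := by
  intro m hm hmν
  by_contra! hwe
  refine he₁ (mem_dualCone_of_forall_add_nsmul_mem (x := toQ m) fun k => ?_)
  rw [← toQ_add_nsmul]
  exact add_nsmul_mem_of_weight_nonneg he₂ (pairingHom_nonneg hν) hwe hm hmν k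

end DualCone

open AddMonoidAlgebra in
theorem stmt7_general {n : ℕ} (K : Type*) [Field K] [CharZero K]
    (σ ρ : Set (Vec n)) (ν : Vec n)
    (hρ : IsExtremalRay σ ρ ν)
    (e : Fin n → ℤ)
    (he₁ : toQ e ∉ dualCone σ)
    (he₂ : ∀ m : Fin n → ℤ, toQ m ∈ dualCone σ → pairQ (toQ m) ν ≠ 0 →
      toQ (m + e) ∈ dualCone σ) :
    ∃ D : Derivation K (AddMonoidAlgebra K ↥(latticeCone σ))
        (AddMonoidAlgebra K ↥(latticeCone σ)),
      (∀ (m m' : latticeCone σ), (m' : Fin n → ℤ) = (m : Fin n → ℤ) + e →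
        D (single m (1 : K)) = algebraMap ℚ K (pairQ (toQ m) ν) • single m' (1 : K)) ∧
      (∀ m : latticeCone σ, pairQ (toQ m) ν = 0 → D (single m (1 : K)) = 0) ∧
      IsLND D ∧
      (∀ x, D x = 0 ↔ x ∈ Submodule.span K
        {y : AddMonoidAlgebra K ↥(latticeCone σ) |
          ∃ m : latticeCone σ, pairQ (toQ m) ν = 0 ∧ y = single m (1 : K)}) := by
  have hν := hρ.generator_mem_s7
  have hw := pairingHom_nonneg hν
  have hshift : ∀ m ∈ latticeCone σ, pairingHom ν m ≠ 0 → m + e ∈ latticeCone σ := he₂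
  refine ⟨weightShiftDerivation K (latticeCone σ) (pairingHom ν) e hshift hw,
    fun m m' hm' => weightShiftDerivation_single_of_coe_eq_add hm' 1,
    fun m hm => weightShiftDerivation_single_of_weight_eq_zero hm 1,
    isLND_weightShiftDerivation (pairingHom_lt_zero_of_notMem_dualCone hν he₁ hshift),
    fun x => ?_⟩
  rw [weightShiftDerivation_eq_zero_iff]
  congr!
  ext y
  simp [eq_comm]

open AddMonoidAlgebra in
/-- Lemma 2.8 (toric-LND): given an extremal ray `ρ` of a pointed full-dimensional
rational polyhedral cone `σ` with primitive generator `ν`, and `e ∈ S_ρ`, there is a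
(unique) derivation `∂` of the affine semigroup algebra `A = K[σ^∨ ∩ M]` with
`∂(χ^m) = ⟨m, ν⟩ χ^{m+e}`; it is locally nilpotent with kernel `K[τ ∩ M]`,
`τ = σ^∨ ∩ ρ^⊥`. -/
theorem stmt7 {n : ℕ} (K : Type*) [Field K] [CharZero K]
    (σ ρ : Set (Vec n)) (ν : Vec n)
    (hσ : IsRatPolyCone σ) (hpt : PointedCone' σ) (hfull : FullDim σ)
    (hρ : IsExtremalRay σ ρ ν)
    (e : Fin n → ℤ)
    (he₁ : toQ e ∉ dualCone σ)
    (he₂ : ∀ m : Fin n → ℤ, toQ m ∈ dualCone σ → pairQ (toQ m) ν ≠ 0 →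
      toQ (m + e) ∈ dualCone σ) :
    ∃ D : Derivation K (AddMonoidAlgebra K ↥(latticeCone σ))
        (AddMonoidAlgebra K ↥(latticeCone σ)),
      (∀ (m m' : latticeCone σ), (m' : Fin n → ℤ) = (m : Fin n → ℤ) + e →
        D (single m (1 : K)) = algebraMap ℚ K (pairQ (toQ m) ν) • single m' (1 : K)) ∧
      (∀ m : latticeCone σ, pairQ (toQ m) ν = 0 → D (single m (1 : K)) = 0) ∧
      IsLND D ∧
      (∀ x, D x = 0 ↔ x ∈ Submodule.span K
        {y : AddMonoidAlgebra K ↥(latticeCone σ) |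
          ∃ m : latticeCone σ, pairQ (toQ m) ν = 0 ∧ y = single m (1 : K)}) :=
  stmt7_general K σ ρ ν hρ e he₁ he₂
end
end

section
/- Let A = K[σ^∨ ∩ M] be an affine semigroup algebra over a field K of characteristic 0 with σ pointed and full-dimensional. Every nonzero homogeneous locally nilpotent derivation ∂ on A has degree deg ∂ ∉ σ^∨, i.e., ∂ is negative. -/
open scoped BigOperators Pointwise

noncomputable section

/-! A derivation `D` of `K[G]` that is homogeneous of degree `e` acts by
`D χ^m = φ(m) χ^(m+e)`, and the Leibniz rule makes the weight `φ` additive. Iterating,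
`D^k χ^m = (∏_{j<k} φ(m + j e)) χ^(m+ke)`, so local nilpotence yields for every `m` some `j` with
`φ(m + j e) = φ(m) + j φ(e) = 0`. When `e ∈ σ^∨`, the degree `e` is itself an exponent of
`K[σ^∨ ∩ M]`; taking `m = e` gives `(j + 1) φ(e) = 0`, so `φ(e) = 0` in characteristic zero,
then `φ = 0` and `D = 0`. -/

section HomogeneousDerivation

open AddMonoidAlgebra
open scoped AddMonoidAlgebra

namespace Derivation

variable {K G : Type*} [CommRing K] [AddCommMonoid G]

def IsHomogeneous (D : Derivation K K[G] K[G]) (e : G) : Prop :=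
  ∀ m : G, ∃ c : K, D (single m 1) = single (m + e) c

def weight (D : Derivation K K[G] K[G]) (e : G) (m : G) : K :=
  (D (single m 1)).coeff (m + e)

namespace IsHomogeneous

variable {D : Derivation K K[G] K[G]} {e : G}

theorem apply_single_one (hD : D.IsHomogeneous e) (m : G) :
    D (single m 1) = single (m + e) (D.weight e m) := by
  obtain ⟨c, hc⟩ := hD m
  rw [weight, hc, coeff_single, Finsupp.single_eq_same]

theorem apply_single (hD : D.IsHomogeneous e) (m : G) (r : K) :
    D (single m r) = single (m + e) (r * D.weight e m) := by
  rw [← mul_one r, ← smul_single', D.map_smul, hD.apply_single_one, smul_single', mul_one]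

theorem weight_add (hD : D.IsHomogeneous e) (a b : G) :
    D.weight e (a + b) = D.weight e a + D.weight e b := by
  have hleib := congr(($(D.leibniz (single a (1 : K)) (single b 1))).coeff (a + b + e))
  rw [single_mul_single, one_mul, hD.apply_single_one, hD.apply_single_one,
    hD.apply_single_one] at hleib
  simp only [smul_eq_mul, single_mul_single, one_mul, ← add_assoc, add_comm b a, coeff_add,
    coeff_single, Finsupp.add_apply, Finsupp.single_eq_same] at hleib
  linear_combination hleib

theorem weight_add_nsmul (hD : D.IsHomogeneous e) (m : G) (j : ℕ) :
    D.weight e (m + j • e) = D.weight e m + j * D.weight e e := by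
  induction j with
  | zero => simp
  | succ j ih => rw [succ_nsmul, ← add_assoc, hD.weight_add, ih]; push_cast; ring

theorem iterate_apply_single_one (hD : D.IsHomogeneous e) (m : G) (k : ℕ) :
    (⇑D)^[k] (single m 1) =
      single (m + k • e) (∏ j ∈ Finset.range k, D.weight e (m + j • e)) := by
  induction k with
  | zero => simp
  | succ k ih =>
    rw [Function.iterate_succ_apply', ih, hD.apply_single, Finset.prod_range_succ, succ_nsmul,
      add_assoc]

variable [NoZeroDivisors K] [CharZero K]

theorem exists_weight_add_nsmul_eq_zero (hD : D.IsHomogeneous e) (hlnd : IsLND D) (m : G) :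
    ∃ j : ℕ, D.weight e (m + j • e) = 0 := by
  obtain ⟨k, hk⟩ := hlnd (single m 1)
  rw [hD.iterate_apply_single_one, single_eq_zero, Finset.prod_eq_zero_iff] at hk
  obtain ⟨j, -, hj⟩ := hk
  exact ⟨j, hj⟩

theorem weight_eq_zero (hD : D.IsHomogeneous e) (hlnd : IsLND D) (m : G) :
    D.weight e m = 0 := by
  have hee : D.weight e e = 0 := by
    obtain ⟨j, hj⟩ := hD.exists_weight_add_nsmul_eq_zero hlnd e
    rw [hD.weight_add_nsmul] at hj
    have : ((j + 1 : ℕ) : K) * D.weight e e = 0 := by push_cast; linear_combination hj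
    exact (mul_eq_zero.mp this).resolve_left (Nat.cast_ne_zero.mpr j.succ_ne_zero)
  obtain ⟨j, hj⟩ := hD.exists_weight_add_nsmul_eq_zero hlnd m
  rwa [hD.weight_add_nsmul, hee, mul_zero, add_zero] at hj

theorem eq_zero_of_isLND (hD : D.IsHomogeneous e) (hlnd : IsLND D) : D = 0 := by
  have h : (D : K[G] →ₗ[K] K[G]) = 0 := lhom_ext' fun m ↦ LinearMap.ext_ring <| by
    simp [hD.apply_single_one, hD.weight_eq_zero hlnd]
  exact Derivation.ext (LinearMap.congr_fun h)

end IsHomogeneous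

end Derivation

end HomogeneousDerivation

open AddMonoidAlgebra in
theorem stmt9_general {n : ℕ} (K : Type*) [Field K] [CharZero K]
    (σ : Set (Vec n))
    (D : Derivation K (AddMonoidAlgebra K ↥(latticeCone σ))
        (AddMonoidAlgebra K ↥(latticeCone σ)))
    (hDne : D ≠ 0) (hlnd : IsLND D)
    (e : Fin n → ℤ)
    (hdeg : ∀ m : latticeCone σ, D (single m (1 : K)) ≠ 0 →
      ∃ (m' : latticeCone σ) (c : K),
        (m' : Fin n → ℤ) = (m : Fin n → ℤ) + e ∧ D (single m (1 : K)) = single m' c) :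
    toQ e ∉ dualCone σ := by
  intro he
  have hD : D.IsHomogeneous ⟨e, he⟩ := by
    intro m
    by_cases hm : D (single m 1) = 0
    · exact ⟨0, by rw [hm, single_zero]⟩
    · obtain ⟨m', c, hm', hc⟩ := hdeg m hm
      exact ⟨c, by rw [hc, show m' = m + ⟨e, he⟩ from Subtype.ext hm']⟩
  exact hDne (hD.eq_zero_of_isLND hlnd)

open AddMonoidAlgebra in
/-- Corollary 2.11 (toric-negative): every nonzero homogeneous locally nilpotent
derivation of the affine semigroup algebra `K[σ^∨ ∩ M]`, of degree `e`, satisfies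
`e ∉ σ^∨`, i.e. it is negative. -/
theorem stmt9 {n : ℕ} (K : Type*) [Field K] [CharZero K]
    (σ : Set (Vec n))
    (hσ : IsRatPolyCone σ) (hpt : PointedCone' σ) (hfull : FullDim σ)
    (D : Derivation K (AddMonoidAlgebra K ↥(latticeCone σ))
        (AddMonoidAlgebra K ↥(latticeCone σ)))
    (hDne : D ≠ 0) (hlnd : IsLND D)
    (e : Fin n → ℤ)
    (hdeg : ∀ m : latticeCone σ, D (single m (1 : K)) ≠ 0 →
      ∃ (m' : latticeCone σ) (c : K),
        (m' : Fin n → ℤ) = (m : Fin n → ℤ) + e ∧ D (single m (1 : K)) = single m' c) :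
    toQ e ∉ dualCone σ :=
  stmt9_general K σ D hDne hlnd e hdeg
end
end

section
/- A nonzero homogeneous locally nilpotent derivation ∂ on an affine semigroup algebra A = K[σ^∨ ∩ M] is uniquely determined, up to multiplication by a nonzero scalar in K, by its degree e = deg ∂. Concretely: if ∂ and ∂' are nonzero homogeneous LNDs on A with deg ∂ = deg ∂', then ∂' = λ∂ for some λ ∈ K^*. -/
open scoped BigOperators Pointwise

noncomputable section

/-!
Write `∂ χ^m = C(m) χ^(m+e)`. The Leibniz rule makes `C` additive on the monoid `S = σ^∨ ∩ M`,
so `C(v + e) - C(v) = δ` does not depend on `v`. Local nilpotency makes `C` vanish somewhere on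
every `e`-string `v, v + e, v + 2e, …`; since `C(v) ≠ 0` forces `v + e ∈ S`, the string stays in
`S` up to that zero, and in characteristic zero it cannot be continued past it. Hence
`C(v) = -j δ` with `j` the length of the `e`-string through `v` in `S`, a number depending only
on `S` and `e`, and `δ ≠ 0` because `∂ ≠ 0`. So the weights of `∂` and `∂'` are proportional.
-/

open AddMonoidAlgebra

def IsStringLength {G : Type*} [AddCommMonoid G] (S : AddSubmonoid G) (e v : G) (j : ℕ) :
    Prop :=
  (∀ i ≤ j, v + i • e ∈ S) ∧ v + (j + 1) • e ∉ S

namespace IsStringLength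

variable {G : Type*} [AddCommMonoid G] {S : AddSubmonoid G} {e v : G} {j j' : ℕ}

theorem le_of_forall_mem (h : IsStringLength S e v j) (h' : ∀ i ≤ j', v + i • e ∈ S) :
    j' ≤ j := by
  by_contra hlt
  exact h.2 (h' (j + 1) (by omega))

theorem unique (h : IsStringLength S e v j) (h' : IsStringLength S e v j') : j = j' :=
  le_antisymm (h'.le_of_forall_mem h.1) (h.le_of_forall_mem h'.1)

end IsStringLength

structure IsLNDWeight {G K : Type*} [AddCommMonoid G] [Field K] (S : AddSubmonoid G) (e : G)
    (C : G → K) : Prop where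
  map_add : ∀ a ∈ S, ∀ b ∈ S, C (a + b) = C a + C b
  add_mem : ∀ v ∈ S, C v ≠ 0 → v + e ∈ S
  exists_eq_zero : ∀ v ∈ S, ∃ i : ℕ, C (v + i • e) = 0

section Weight

variable {G K : Type*} [AddCommMonoid G] [Field K] {S : AddSubmonoid G} {e : G} {C : G → K}
  {δ : K}

theorem apply_add_nsmul_of_forall_mem (hstep : ∀ v ∈ S, v + e ∈ S → C (v + e) = C v + δ)
    {v : G} {j : ℕ} (hmem : ∀ i ≤ j, v + i • e ∈ S) : C (v + j • e) = C v + j * δ := by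
  induction j with
  | zero => simp
  | succ j ih =>
    have hj := hmem j (by omega)
    rw [succ_nsmul, ← add_assoc, hstep _ hj (by rw [add_assoc, ← succ_nsmul]; exact hmem _ le_rfl),
      ih fun i hi => hmem i (by omega)]
    push_cast
    ring

namespace IsLNDWeight

theorem add_sub_eq (hC : IsLNDWeight S e C) {v w : G} (hv : v ∈ S) (hve : v + e ∈ S)
    (hw : w ∈ S) (hwe : w + e ∈ S) : C (v + e) - C v = C (w + e) - C w := by
  have h := hC.map_add _ hve _ hw
  rw [add_right_comm, add_assoc, hC.map_add _ hv _ hwe] at h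
  linear_combination -h

theorem exists_forall_mem_eq_neg_mul (hC : IsLNDWeight S e C)
    (hstep : ∀ v ∈ S, v + e ∈ S → C (v + e) = C v + δ) {v : G} (hv : v ∈ S) {i : ℕ}
    (hi : C (v + i • e) = 0) : ∃ j : ℕ, (∀ l ≤ j, v + l • e ∈ S) ∧ C v = -(j * δ) := by
  induction i generalizing v with
  | zero => exact ⟨0, fun l hl => by simpa [Nat.le_zero.1 hl] using hv, by simpa using hi⟩
  | succ i ih =>
    by_cases hv0 : C v = 0
    · exact ⟨0, fun l hl => by simpa [Nat.le_zero.1 hl] using hv, by simpa using hv0⟩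
    have hve := hC.add_mem v hv hv0
    obtain ⟨j, hmem, hj⟩ := ih hve (by rwa [add_assoc, ← succ_nsmul'])
    refine ⟨j + 1, fun l hl => ?_, ?_⟩
    · rcases l with _ | l
      · simpa using hv
      · rw [succ_nsmul', ← add_assoc]
        exact hmem l (by omega)
    · rw [hstep v hv hve] at hj
      push_cast
      linear_combination hj

theorem exists_increment (hC : IsLNDWeight S e C) (hne : ∃ w ∈ S, C w ≠ 0) :
    ∃ δ ≠ 0, ∀ v ∈ S, v + e ∈ S → C (v + e) = C v + δ := by
  obtain ⟨w, hw, hw0⟩ := hne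
  have hwe := hC.add_mem w hw hw0
  have hstep : ∀ v ∈ S, v + e ∈ S → C (v + e) = C v + (C (w + e) - C w) := fun v hv hve => by
    rw [← hC.add_sub_eq hv hve hw hwe]
    ring
  refine ⟨_, fun hδ => hw0 ?_, hstep⟩
  obtain ⟨i, hi⟩ := hC.exists_eq_zero w hw
  obtain ⟨j, -, hj⟩ := hC.exists_forall_mem_eq_neg_mul hstep hw hi
  rw [hj, hδ, mul_zero, neg_zero]

theorem exists_isStringLength_eq_neg_mul [CharZero K] (hC : IsLNDWeight S e C)
    (hstep : ∀ v ∈ S, v + e ∈ S → C (v + e) = C v + δ) (hδ : δ ≠ 0) {v : G} (hv : v ∈ S) :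
    ∃ j : ℕ, IsStringLength S e v j ∧ C v = -(j * δ) := by
  obtain ⟨i, hi⟩ := hC.exists_eq_zero v hv
  obtain ⟨j, hmem, hj⟩ := hC.exists_forall_mem_eq_neg_mul hstep hv hi
  refine ⟨j, ⟨hmem, fun hu => ?_⟩, hj⟩
  have hCu : C (v + (j + 1) • e) = δ := by
    have hje := hmem j le_rfl
    rw [succ_nsmul, ← add_assoc, hstep _ hje (by rwa [add_assoc, ← succ_nsmul]),
      apply_add_nsmul_of_forall_mem hstep hmem, hj]
    ring
  obtain ⟨i', hi'⟩ := hC.exists_eq_zero _ hu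
  obtain ⟨j', -, hj'⟩ := hC.exists_forall_mem_eq_neg_mul hstep hu hi'
  have hzero : ((j' : K) + 1) * δ = 0 := by
    linear_combination hCu.symm.trans hj'
  exact hδ ((mul_eq_zero.1 hzero).resolve_left (Nat.cast_add_one_ne_zero j'))

theorem exists_eq_mul [CharZero K] {C' : G → K} (hC : IsLNDWeight S e C)
    (hC' : IsLNDWeight S e C') (hne : ∃ w ∈ S, C w ≠ 0) (hne' : ∃ w ∈ S, C' w ≠ 0) :
    ∃ c : K, c ≠ 0 ∧ ∀ v ∈ S, C' v = c * C v := by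
  obtain ⟨δ, hδ, hstep⟩ := hC.exists_increment hne
  obtain ⟨δ', hδ', hstep'⟩ := hC'.exists_increment hne'
  refine ⟨δ' / δ, div_ne_zero hδ' hδ, fun v hv => ?_⟩
  obtain ⟨j, hj, hCv⟩ := hC.exists_isStringLength_eq_neg_mul hstep hδ hv
  obtain ⟨j', hj', hC'v⟩ := hC'.exists_isStringLength_eq_neg_mul hstep' hδ' hv
  rw [hCv, hC'v, hj.unique hj']
  field_simp

end IsLNDWeight

end Weight

section MonoidAlgebra

variable {R M : Type*} [CommSemiring R] [AddCommMonoid M]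

theorem AddMonoidAlgebra.mapDomainAlgHom_injective {N : Type*} [AddCommMonoid N] {f : M →+ N}
    (hf : Function.Injective f) : Function.Injective (mapDomainAlgHom R R f) :=
  mapDomain_injective hf

theorem AddMonoidAlgebra.mem_of_mapDomainAlgHom_eq_single {S : AddSubmonoid M} {x : R[S]}
    {g : M} {c : R} (h : mapDomainAlgHom R R S.subtype x = single g c) (hc : c ≠ 0) :
    g ∈ S := by
  by_contra hg
  have hcoeff := congrArg (fun y => y.coeff g) h
  simp only [mapDomainAlgHom_apply, coeff_mapDomain, coeff_single, Finsupp.single_eq_same]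
    at hcoeff
  rw [Finsupp.mapDomain_of_notMem_range _ _ (by simpa using hg)] at hcoeff
  exact hc hcoeff.symm

theorem AddMonoidAlgebra.derivation_ext {N : Type*} [AddCommMonoid N] [Module R[M] N]
    [Module R N] [IsScalarTower R R[M] N] {D₁ D₂ : Derivation R R[M] N}
    (h : ∀ m, D₁ (single m 1) = D₂ (single m 1)) : D₁ = D₂ := by
  refine Derivation.ext fun x => ?_
  induction x using induction_linear with
  | zero => simp
  | add f g hf hg => rw [_root_.map_add, _root_.map_add, hf, hg]
  | single m c =>
    rw [← mul_one c, ← smul_eq_mul, ← smul_single, D₁.map_smul, D₂.map_smul, h]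

end MonoidAlgebra

section Derivation

variable {G K : Type*} [AddCommMonoid G] [Field K] {S : AddSubmonoid G}

def Derivation.IsHomogeneous_s11 (D : Derivation K K[S] K[S]) (e : G) : Prop :=
  ∀ m : S, D (single m 1) ≠ 0 →
    ∃ (m' : S) (c : K), (m' : G) = m + e ∧ D (single m 1) = single m' c

/-- `D (χ^m) = C m • χ^(m + e)`, read in `K[G]` so that `m + e` need not lie in `S`. -/
def Derivation.HasWeight (D : Derivation K K[S] K[S]) (e : G) (C : G → K) : Prop :=
  ∀ m : S, mapDomainAlgHom K K S.subtype (D (single m 1)) = single (↑m + e) (C m)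

namespace Derivation

variable {D D' : Derivation K K[S] K[S]} {e : G} {C C' : G → K}

theorem IsHomogeneous_s11.exists_hasWeight (hD : D.IsHomogeneous_s11 e) : ∃ C, D.HasWeight e C := by
  classical
  have hc : ∀ m : S, ∃ c : K,
      mapDomainAlgHom K K S.subtype (D (single m 1)) = single (↑m + e) c := by
    intro m
    by_cases h0 : D (single m 1) = 0
    · exact ⟨0, by simp [h0]⟩
    · obtain ⟨m', c, hm', hD⟩ := hD m h0
      exact ⟨c, by rw [hD, mapDomainAlgHom_apply, mapDomain_single, AddSubmonoid.coe_subtype, hm']⟩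
  choose c hc using hc
  refine ⟨fun g => if h : g ∈ S then c ⟨g, h⟩ else 0, fun m => ?_⟩
  simp only [SetLike.coe_mem, dif_pos, Subtype.coe_eta, hc]

theorem HasWeight.weight_add (hC : D.HasWeight e C) (a b : S) :
    C (↑a + ↑b) = C a + C b := by
  have hmul : (single (a + b) 1 : K[S]) = single a 1 * single b 1 := by
    rw [single_mul_single, one_mul]
  have h := hC (a + b)
  rw [hmul, D.leibniz, smul_eq_mul, smul_eq_mul, map_add, map_mul, map_mul, hC, hC] at h
  simp only [mapDomainAlgHom_apply, mapDomain_single, AddSubmonoid.coe_subtype,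
    single_mul_single, one_mul, AddSubmonoid.coe_add] at h
  rw [add_assoc, add_left_comm, ← single_add, single_right_inj] at h
  rw [← h, add_comm]

theorem HasWeight.add_mem (hC : D.HasWeight e C) {m : S} (hm : C m ≠ 0) : ↑m + e ∈ S :=
  mem_of_mapDomainAlgHom_eq_single (hC m) hm

theorem HasWeight.exists_ne_zero (hC : D.HasWeight e C) (hD : D ≠ 0) : ∃ w ∈ S, C w ≠ 0 := by
  by_contra! h
  refine hD (derivation_ext fun m => ?_)
  apply mapDomainAlgHom_injective S.subtype_injective
  rw [hC m, h m m.2, single_zero, Derivation.zero_apply, map_zero]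

theorem HasWeight.exists_eq_zero_of_iterate (hC : D.HasWeight e C) {m : S} {k : ℕ}
    (hk : (⇑D)^[k] (single m 1) = 0) : ∃ i : ℕ, C (↑m + i • e) = 0 := by
  induction k generalizing m with
  | zero => simp at hk
  | succ k ih =>
    by_cases hm : C m = 0
    · exact ⟨0, by simpa using hm⟩
    set m' : S := ⟨↑m + e, hC.add_mem hm⟩
    have hDm : D (single m 1) = C m • single m' 1 := by
      apply mapDomainAlgHom_injective S.subtype_injective
      rw [hC m, _root_.map_smul, mapDomainAlgHom_apply, mapDomain_single, smul_single', mul_one]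
      rfl
    have hpow : (⇑D)^[k] = ⇑((D : K[S] →ₗ[K] K[S]) ^ k) := by
      rw [Module.End.coe_pow]
      rfl
    have hiter : (⇑D)^[k] (single m' 1) = 0 := by
      rw [Function.iterate_succ_apply, hDm, hpow, _root_.map_smul] at hk
      rw [hpow]
      exact (smul_eq_zero.1 hk).resolve_left hm
    obtain ⟨i, hi⟩ := ih hiter
    exact ⟨i + 1, by rwa [succ_nsmul', ← add_assoc]⟩

theorem HasWeight.isLNDWeight (hC : D.HasWeight e C) (hD : IsLND D) : IsLNDWeight S e C where
  map_add a ha b hb := hC.weight_add ⟨a, ha⟩ ⟨b, hb⟩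
  add_mem v hv h := hC.add_mem (m := ⟨v, hv⟩) h
  exists_eq_zero v hv := by
    obtain ⟨k, hk⟩ := hD (single ⟨v, hv⟩ 1)
    exact hC.exists_eq_zero_of_iterate hk

theorem HasWeight.eq_smul (hC : D.HasWeight e C) (hC' : D'.HasWeight e C') {c : K}
    (h : ∀ v ∈ S, C' v = c * C v) : D' = c • D := by
  refine derivation_ext fun m => mapDomainAlgHom_injective S.subtype_injective ?_
  rw [hC' m, Derivation.smul_apply, _root_.map_smul, hC m, smul_single', h m m.2]

end Derivation

end Derivation

open AddMonoidAlgebra in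
theorem stmt11_general {n : ℕ} (K : Type*) [Field K] [CharZero K]
    (σ : Set (Vec n))
    (D D' : Derivation K (AddMonoidAlgebra K ↥(latticeCone σ))
        (AddMonoidAlgebra K ↥(latticeCone σ)))
    (hDne : D ≠ 0) (hD'ne : D' ≠ 0) (hlnd : IsLND D) (hlnd' : IsLND D')
    (e : Fin n → ℤ)
    (hdeg : ∀ m : latticeCone σ, D (single m (1 : K)) ≠ 0 →
      ∃ (m' : latticeCone σ) (c : K),
        (m' : Fin n → ℤ) = (m : Fin n → ℤ) + e ∧ D (single m (1 : K)) = single m' c)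
    (hdeg' : ∀ m : latticeCone σ, D' (single m (1 : K)) ≠ 0 →
      ∃ (m' : latticeCone σ) (c : K),
        (m' : Fin n → ℤ) = (m : Fin n → ℤ) + e ∧ D' (single m (1 : K)) = single m' c) :
    ∃ lam : K, lam ≠ 0 ∧ D' = lam • D := by
  obtain ⟨C, hC⟩ := Derivation.IsHomogeneous_s11.exists_hasWeight hdeg
  obtain ⟨C', hC'⟩ := Derivation.IsHomogeneous_s11.exists_hasWeight hdeg'
  obtain ⟨c, hc, hCC⟩ := (hC.isLNDWeight hlnd).exists_eq_mul (hC'.isLNDWeight hlnd')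
    (hC.exists_ne_zero hDne) (hC'.exists_ne_zero hD'ne)
  exact ⟨c, hc, hC.eq_smul hC' hCC⟩

open AddMonoidAlgebra in
/-- Corollary 2.10 (toric-degree): a nonzero homogeneous locally nilpotent derivation
on the affine semigroup algebra `A = K[σ^∨ ∩ M]` is uniquely determined, up to a nonzero
scalar of `K`, by its degree: if `∂, ∂'` are nonzero homogeneous LNDs with the same
degree `e`, then `∂' = λ • ∂` for some `λ ∈ K^*`. -/
theorem stmt11 {n : ℕ} (K : Type*) [Field K] [CharZero K]
    (σ : Set (Vec n))
    (hσ : IsRatPolyCone σ) (hpt : PointedCone' σ) (hfull : FullDim σ)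
    (D D' : Derivation K (AddMonoidAlgebra K ↥(latticeCone σ))
        (AddMonoidAlgebra K ↥(latticeCone σ)))
    (hDne : D ≠ 0) (hD'ne : D' ≠ 0) (hlnd : IsLND D) (hlnd' : IsLND D')
    (e : Fin n → ℤ)
    (hdeg : ∀ m : latticeCone σ, D (single m (1 : K)) ≠ 0 →
      ∃ (m' : latticeCone σ) (c : K),
        (m' : Fin n → ℤ) = (m : Fin n → ℤ) + e ∧ D (single m (1 : K)) = single m' c)
    (hdeg' : ∀ m : latticeCone σ, D' (single m (1 : K)) ≠ 0 →
      ∃ (m' : latticeCone σ) (c : K),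
        (m' : Fin n → ℤ) = (m : Fin n → ℤ) + e ∧ D' (single m (1 : K)) = single m' c) :
    ∃ lam : K, lam ≠ 0 ∧ D' = lam • D :=
  stmt11_general K σ D D' hDne hD'ne hlnd hlnd' e hdeg hdeg'
end
end

section
/- Let A be a finitely generated normal domain over an algebraically closed field K of characteristic 0 and ∂ a nonzero locally nilpotent derivation on A. Let v ∈ ker ∂ be nonzero, d > 0 an integer, and A' the integral closure (in its field of fractions) of A[u] where u^d = v. Then ∂ extends uniquely to a locally nilpotent derivation ∂' on A'. -/
open Polynomial Finset
open scoped Nat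

namespace Derivation

variable {R S : Type*} [CommRing R] [CommRing S] [Algebra R S]

theorem iterate_mul (δ : Derivation R S S) (n : ℕ) (a b : S) :
    δ^[n] (a * b) = ∑ ij ∈ antidiagonal n, n.choose ij.1 • (δ^[ij.1] a * δ^[ij.2] b) := by
  induction n with
  | zero => simp
  | succ n ih =>
    rw [sum_antidiagonal_choose_succ_nsmul (fun i j => δ^[i] a * δ^[j] b) n]
    simp only [Function.iterate_succ_apply', ih, map_sum, map_nsmul, leibniz, smul_eq_mul,
      nsmul_add, sum_add_distrib]
    congr 1
    refine sum_congr rfl fun ⟨i, j⟩ hij => ?_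
    rw [n.choose_symm_of_eq_add (mem_antidiagonal.1 hij).symm, mul_comm]

theorem iterate_eq_zero_of_le (δ : Derivation R S S) {a : S} {k n : ℕ} (hk : δ^[k] a = 0)
    (hkn : k ≤ n) : δ^[n] a = 0 := by
  rw [← Nat.sub_add_cancel hkn, Function.iterate_add_apply, hk,
    Function.iterate_fixed (map_zero δ)]

theorem iterate_eq_zero_of_apply_eq_zero (δ : Derivation R S S) {a : S} (ha : δ a = 0) {n : ℕ}
    (hn : n ≠ 0) : δ^[n] a = 0 :=
  δ.iterate_eq_zero_of_le (k := 1) ha (Nat.one_le_iff_ne_zero.2 hn)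

noncomputable def mapCoeffsSelf (D : Derivation R S S) : Derivation R S[X] S[X] :=
  PolynomialModule.equivPolynomialSelf.compDer D.mapCoeffs

@[simp]
theorem coeff_mapCoeffsSelf (D : Derivation R S S) (p : S[X]) (n : ℕ) :
    (D.mapCoeffsSelf p).coeff n = D (p.coeff n) := rfl

theorem iterate_mapCoeffsSelf_coeff (D : Derivation R S S) (m : ℕ) (p : S[X]) (n : ℕ) :
    (D.mapCoeffsSelf^[m] p).coeff n = D^[m] (p.coeff n) := by
  induction m generalizing p with
  | zero => rfl
  | succ m ih => rw [Function.iterate_succ_apply, ih, coeff_mapCoeffsSelf,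
      Function.iterate_succ_apply]

theorem mapCoeffsSelf_C (D : Derivation R S S) (a : S) : D.mapCoeffsSelf (C a) = C (D a) := by
  ext n
  rcases eq_or_ne n 0 with rfl | hn <;> simp [coeff_C, *]

theorem mapCoeffsSelf_X_pow_sub_C (D : Derivation R S S) (n : ℕ) {a : S} (ha : D a = 0) :
    D.mapCoeffsSelf (X ^ n - C a) = 0 := by
  rw [map_sub, mapCoeffsSelf_C, ha, map_zero, sub_zero]
  ext m
  rw [coeff_mapCoeffsSelf, coeff_X_pow, coeff_zero]
  split_ifs <;> simp

end Derivation

theorem IsLND.mapCoeffsSelf {R S : Type*} [CommRing R] [CommRing S] [Algebra R S]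
    {D : Derivation R S S} (hD : IsLND D) : IsLND D.mapCoeffsSelf := by
  intro p
  choose k hk using hD
  refine ⟨p.support.sup fun i => k (p.coeff i), ?_⟩
  ext n
  rw [Derivation.iterate_mapCoeffsSelf_coeff, coeff_zero]
  by_cases hn : n ∈ p.support
  · exact D.iterate_eq_zero_of_le (hk _) (le_sup (f := fun i => k (p.coeff i)) hn)
  · rw [notMem_support_iff.1 hn, Function.iterate_fixed (map_zero D)]

theorem IsLND.finite_support {K S : Type*} [Field K] [CommRing S] [Algebra K S]
    {δ : Derivation K S S} (hδ : IsLND δ) (a : S) :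
    (Function.support fun n => (n ! : K)⁻¹ • δ^[n] a).Finite := by
  obtain ⟨k, hk⟩ := hδ a
  refine (Set.finite_lt_nat k).subset fun n hn => ?_
  by_contra! hkn
  exact hn (by simp only [δ.iterate_eq_zero_of_le hk (not_lt.1 hkn), smul_zero])

namespace Derivation

variable {K S : Type*} [Field K] [CharZero K] [CommRing S] [Algebra K S]

noncomputable def expPoly (δ : Derivation K S S) (hδ : IsLND δ) : S →ₐ[K] S[X] where
  toFun a := ⟨.ofCoeff (.ofSupportFinite _ (hδ.finite_support a))⟩
  map_one' := by
    ext n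
    rcases eq_or_ne n 0 with rfl | hn
    · simp [coeff_ofFinsupp, Finsupp.ofSupportFinite_coe]
    · simp [coeff_ofFinsupp, Finsupp.ofSupportFinite_coe, coeff_one, hn,
        δ.iterate_eq_zero_of_apply_eq_zero δ.map_one_eq_zero hn]
  map_mul' a b := by
    ext n
    simp only [coeff_ofFinsupp, Finsupp.ofSupportFinite_coe, coeff_mul, iterate_mul, smul_sum]
    refine sum_congr rfl fun ⟨i, j⟩ hij => ?_
    obtain rfl : i + j = n := mem_antidiagonal.1 hij
    rw [← Nat.cast_smul_eq_nsmul K, smul_mul_smul_comm, smul_smul, Nat.cast_add_choose]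
    have : ((i + j)! : K) ≠ 0 := Nat.cast_ne_zero.2 (Nat.factorial_ne_zero _)
    field_simp
  map_zero' := by
    ext n
    simp [coeff_ofFinsupp, Finsupp.ofSupportFinite_coe]
  map_add' a b := by
    ext n
    simp [coeff_ofFinsupp, Finsupp.ofSupportFinite_coe]
  commutes' k := by
    ext n
    rcases eq_or_ne n 0 with rfl | hn
    · simp [coeff_ofFinsupp, Finsupp.ofSupportFinite_coe]
    · simp [coeff_ofFinsupp, Finsupp.ofSupportFinite_coe, coeff_C, hn,
        δ.iterate_eq_zero_of_apply_eq_zero (δ.map_algebraMap k) hn]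

variable (δ : Derivation K S S) (hδ : IsLND δ)

theorem coeff_expPoly (a : S) (n : ℕ) : (δ.expPoly hδ a).coeff n = (n ! : K)⁻¹ • δ^[n] a := rfl

theorem coeff_zero_expPoly (a : S) : (δ.expPoly hδ a).coeff 0 = a := by
  simp [coeff_expPoly]

theorem coeff_one_expPoly (a : S) : (δ.expPoly hδ a).coeff 1 = δ a := by
  simp [coeff_expPoly]

theorem derivative_expPoly (a : S) : derivative (δ.expPoly hδ a) = δ.expPoly hδ (δ a) := by
  ext n
  have : ((n + 1)! : K) ≠ 0 := Nat.cast_ne_zero.2 (Nat.factorial_ne_zero _)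
  rw [coeff_derivative, coeff_expPoly, coeff_expPoly, ← Function.iterate_succ_apply,
    ← Nat.cast_succ, mul_comm, ← nsmul_eq_mul, ← Nat.cast_smul_eq_nsmul K, smul_smul,
    Nat.factorial_succ]
  congr 1
  push_cast
  field_simp

theorem map_expPoly_eq_zero_iff {T : Type*} [CommRing T] [Algebra K T] (f : S →ₐ[K] T)
    (hf : ∀ s, f s = 0 → f (δ s) = 0) (a : S) :
    mapAlgHom f (δ.expPoly hδ a) = 0 ↔ f a = 0 := by
  refine ⟨fun h => by simpa [coeff_zero_expPoly] using congrArg (coeff · 0) h, fun ha => ?_⟩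
  have hiter : ∀ n, f (δ^[n] a) = 0 := fun n => by
    induction n with
    | zero => exact ha
    | succ n ih => rw [Function.iterate_succ_apply']; exact hf _ ih
  ext n
  simp [coeff_expPoly, hiter]

end Derivation

theorem Derivation.aeval_apply_eq_zero_of_aeval_eq_zero {R A B : Type*} [CommRing R]
    [CommRing A] [IsDomain A] [IsIntegrallyClosed A] [CommRing B] [IsDomain B] [Algebra A B]
    [Module.IsTorsionFree A B] [Algebra R A[X]] (Δ : Derivation R A[X] A[X]) {u : B}
    (hu : IsIntegral A u) {f : A[X]} (hf : aeval u f = 0) (hf' : aeval u (derivative f) ≠ 0)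
    (hΔf : Δ f = 0) {p : A[X]} (hp : aeval u p = 0) : aeval u (Δ p) = 0 := by
  obtain ⟨g, rfl⟩ := minpoly.isIntegrallyClosed_dvd hu hf
  -- `f'(u) = m'(u) g(u)` for the minimal polynomial `m` of `u`
  have hg : aeval u g ≠ 0 := fun hg => hf' (by simp [derivative_mul, hg])
  have hΔm : aeval u (Δ (minpoly A u)) = 0 := by
    have := congrArg (aeval u) hΔf
    simp only [leibniz, smul_eq_mul, map_add, map_mul, minpoly.aeval, zero_mul, zero_add,
      map_zero] at this
    exact (mul_eq_zero.1 this).resolve_left hg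
  obtain ⟨h, rfl⟩ := minpoly.isIntegrallyClosed_dvd hu hp
  simp [hΔm]

theorem Derivation.aeval_mapCoeffsSelf_eq_zero {K A B : Type*} [CommRing K] [CommRing A]
    [IsDomain A] [IsIntegrallyClosed A] [Algebra K A] [CommRing B] [IsDomain B] [CharZero B]
    [Algebra A B] [Module.IsTorsionFree A B] (D : Derivation K A A) {u : B} (hu : IsIntegral A u)
    (hu0 : u ≠ 0) {v : A} (hv : D v = 0) {d : ℕ} (hd : d ≠ 0) (hud : u ^ d = algebraMap A B v)
    {p : A[X]} (hp : aeval u p = 0) : aeval u (D.mapCoeffsSelf p) = 0 :=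
  D.mapCoeffsSelf.aeval_apply_eq_zero_of_aeval_eq_zero hu (f := X ^ d - C v) (by simp [hud])
    (by simp [derivative_X_pow, hd, hu0]) (D.mapCoeffsSelf_X_pow_sub_C d hv) hp

namespace AlgHom

theorem exists_extend_of_fractions {K R B F : Type*} [CommRing K] [CommRing R]
    [CommRing B] [IsDomain B] [Field F] [Algebra K R] [Algebra K B] [Algebra K F]
    (ι : R →ₐ[K] B) (E : R →ₐ[K] F) (hker : ∀ r, ι r = 0 ↔ E r = 0)
    (hfrac : ∀ b, ∃ p q, ι q ≠ 0 ∧ ι q * b = ι p) :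
    ∃ ψ : B →ₐ[K] F, ∀ b p q, ι q ≠ 0 → ι q * b = ι p → ψ b = E p / E q := by
  choose p q hq hpq using hfrac
  have hE : ∀ {r}, ι r ≠ 0 → E r ≠ 0 := fun h => mt (hker _).2 h
  have key : ∀ b p' q', ι q' ≠ 0 → ι q' * b = ι p' → E (p b) / E (q b) = E p' / E q' := by
    intro b p' q' hq' hb
    rw [div_eq_div_iff (hE (hq b)) (hE hq'), ← map_mul, ← map_mul, ← sub_eq_zero, ← map_sub,
      ← hker, map_sub, map_mul, map_mul, ← hpq, ← hb]
    ring
  refine ⟨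
    { toFun b := E (p b) / E (q b)
      map_one' := ?_
      map_mul' := ?_
      map_zero' := ?_
      map_add' := ?_
      commutes' := ?_ }, key⟩
  · simpa using key 1 1 1 (by simp) (by simp)
  · intro b c
    rw [key (b * c) (p b * p c) (q b * q c) (by simpa using ⟨hq b, hq c⟩)
      (by rw [map_mul, map_mul, ← hpq, ← hpq]; ring), map_mul, map_mul, mul_div_mul_comm]
  · simpa using key 0 0 1 (by simp) (by simp)
  · intro b c
    rw [key (b + c) (p b * q c + p c * q b) (q b * q c) (by simpa using ⟨hq b, hq c⟩)
      (by simp only [map_mul, map_add, ← hpq]; ring), div_add_div _ _ (hE (hq b)) (hE (hq c))]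
    simp only [map_mul, map_add]
    ring
  · intro k
    simpa using key (algebraMap K B k) (algebraMap K R k) 1 (by simp) (by simp)

theorem exists_comp_eq_of_forall_mem_range {K B S F : Type*} [CommRing K] [Semiring B]
    [Semiring S] [Semiring F] [Algebra K B] [Algebra K S] [Algebra K F] (j : S →ₐ[K] F)
    (hj : Function.Injective j) (ψ : B →ₐ[K] F) (h : ∀ b, ψ b ∈ j.range) :
    ∃ Φ : B →ₐ[K] S, ∀ b, j (Φ b) = ψ b :=
  ⟨((AlgEquiv.ofInjective j hj).symm : j.range →ₐ[K] S).comp (ψ.codRestrict j.range h),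
    fun b => by
      have := AlgEquiv.ofInjective_apply j hj ((AlgEquiv.ofInjective j hj).symm ⟨ψ b, h b⟩)
      rw [AlgEquiv.apply_symm_apply] at this
      exact this.symm⟩

variable {K S : Type*} [CommRing K] [CommRing S] [Algebra K S]

noncomputable def coeffOneDerivation (Φ : S →ₐ[K] S[X]) (hΦ : ∀ s, (Φ s).coeff 0 = s) :
    Derivation K S S :=
  Derivation.mk' ((lcoeff S 1).restrictScalars K ∘ₗ Φ.toLinearMap) fun a b => by
    simp only [LinearMap.coe_comp, LinearMap.coe_restrictScalars, coe_toLinearMap,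
      Function.comp_apply, map_mul, lcoeff_apply, mul_coeff_one, hΦ, smul_eq_mul]
    ring

theorem coeffOneDerivation_apply (Φ : S →ₐ[K] S[X]) (hΦ : ∀ s, (Φ s).coeff 0 = s)
    (s : S) : Φ.coeffOneDerivation hΦ s = (Φ s).coeff 1 := rfl

theorem isLND_coeffOneDerivation (Φ : S →ₐ[K] S[X]) (hΦ : ∀ s, (Φ s).coeff 0 = s)
    (hder : ∀ s, Φ (Φ.coeffOneDerivation hΦ s) = derivative (Φ s)) :
    IsLND (Φ.coeffOneDerivation hΦ) := by
  intro s
  have hiter : ∀ m, Φ ((Φ.coeffOneDerivation hΦ)^[m] s) = derivative^[m] (Φ s) := fun m => by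
    induction m with
    | zero => rfl
    | succ m ih => rw [Function.iterate_succ_apply', Function.iterate_succ_apply', hder, ih]
  refine ⟨(Φ s).natDegree + 1, ?_⟩
  rw [← hΦ (_^[_] s), hiter, iterate_derivative_eq_zero (Nat.lt_succ_self _), coeff_zero]

end AlgHom

namespace Derivation

section

variable {K S : Type*} [CommRing K] [CommRing S] [Algebra K S]

theorem apply_aeval_eq_of_apply_eq {A : Type*} [CommRing A] [Algebra A S]
    {δ₁ δ₂ : Derivation K S S} (hA : ∀ a, δ₁ (algebraMap A S a) = δ₂ (algebraMap A S a)) {u : S}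
    (hu : δ₁ u = δ₂ u) (p : A[X]) : δ₁ (aeval u p) = δ₂ (aeval u p) := by
  induction p using Polynomial.induction_on' with
  | add p q hp hq => simp [hp, hq]
  | monomial n a => simp [aeval_monomial, leibniz_pow, hA, hu]

variable [IsDomain S]

theorem apply_eq_of_mul_eq {δ₁ δ₂ : Derivation K S S} {p q b : S} (hq : q ≠ 0) (hb : q * b = p)
    (hp : δ₁ p = δ₂ p) (hq' : δ₁ q = δ₂ q) : δ₁ b = δ₂ b := by
  have h₁ := δ₁.leibniz q b
  have h₂ := δ₂.leibniz q b
  rw [hb, smul_eq_mul, smul_eq_mul] at h₁ h₂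
  exact mul_left_cancel₀ hq (by linear_combination h₂ - h₁ + hp - b * hq')

theorem algHom_apply_eq_derivative_of_mul_eq (δ : Derivation K S S) (Φ : S →ₐ[K] S[X])
    {p q b : S} (hq : Φ q ≠ 0) (hb : q * b = p) (hp : Φ (δ p) = derivative (Φ p))
    (hq' : Φ (δ q) = derivative (Φ q)) : Φ (δ b) = derivative (Φ b) := by
  have h := congrArg Φ (δ.leibniz q b)
  rw [hb, smul_eq_mul, smul_eq_mul, map_add, map_mul, map_mul, hp, hq', ← hb, map_mul,
    derivative_mul] at h
  exact mul_left_cancel₀ hq (by linear_combination -h)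

theorem ext_of_aeval_fractions {A : Type*} [CommRing A] [Algebra A S] {u : S}
    (hfrac : ∀ b, ∃ p q : A[X], aeval u q ≠ 0 ∧ aeval u q * b = aeval u p)
    {δ₁ δ₂ : Derivation K S S} (hA : ∀ a, δ₁ (algebraMap A S a) = δ₂ (algebraMap A S a))
    (hu : δ₁ u = δ₂ u) : δ₁ = δ₂ := by
  ext b
  obtain ⟨p, q, hq, hb⟩ := hfrac b
  exact apply_eq_of_mul_eq hq hb (apply_aeval_eq_of_apply_eq hA hu p)
    (apply_aeval_eq_of_apply_eq hA hu q)

theorem apply_eq_zero_of_apply_pow_eq_zero [CharZero S] (δ : Derivation K S S) {u : S}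
    (hu : u ≠ 0) {d : ℕ} (hd : d ≠ 0) (h : δ (u ^ d) = 0) : δ u = 0 := by
  rw [leibniz_pow, smul_eq_mul, nsmul_eq_mul] at h
  simpa [hd, hu] using h

end

variable {K A B : Type*} [Field K] [CharZero K] [CommRing A] [Algebra K A] [CommRing B]
  [Algebra K B] [Algebra A B] [IsScalarTower K A B] (D : Derivation K A A)

section

variable (hD : IsLND D) (u : B)

noncomputable def expAeval : A[X] →ₐ[K] B[X] :=
  (mapAlgHom ((aeval u).restrictScalars K)).comp (D.mapCoeffsSelf.expPoly hD.mapCoeffsSelf)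

theorem coeff_zero_expAeval (r : A[X]) : (D.expAeval hD u r).coeff 0 = aeval u r := by
  simp [expAeval, coeff_zero_expPoly]

theorem coeff_one_expAeval (r : A[X]) :
    (D.expAeval hD u r).coeff 1 = aeval u (D.mapCoeffsSelf r) := by
  simp [expAeval, coeff_one_expPoly]

theorem derivative_expAeval (r : A[X]) :
    derivative (D.expAeval hD u r) = D.expAeval hD u (D.mapCoeffsSelf r) := by
  simp [expAeval, derivative_map, derivative_expPoly]

theorem expAeval_eq_zero_iff (hstable : ∀ p, aeval u p = 0 → aeval u (D.mapCoeffsSelf p) = 0)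
    (r : A[X]) : D.expAeval hD u r = 0 ↔ aeval u r = 0 :=
  D.mapCoeffsSelf.map_expPoly_eq_zero_iff hD.mapCoeffsSelf ((aeval u).restrictScalars K) hstable r

end

variable [IsDomain B] {u : B}

theorem exists_algHom_eq_expAeval [IsIntegrallyClosed B] (hD : IsLND D)
    (hint : ∀ b : B, IsIntegral A b)
    (hstable : ∀ p, aeval u p = 0 → aeval u (D.mapCoeffsSelf p) = 0)
    (hfrac : ∀ b, ∃ p q : A[X], aeval u q ≠ 0 ∧ aeval u q * b = aeval u p) :
    ∃ Φ : B →ₐ[K] B[X], (∀ r, Φ (aeval u r) = D.expAeval hD u r) ∧ ∀ b, (Φ b).coeff 0 = b := by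
  let F := FractionRing B[X]
  let j := IsScalarTower.toAlgHom K B[X] F
  have hj : Function.Injective j := IsFractionRing.injective B[X] F
  let E := j.comp (D.expAeval hD u)
  obtain ⟨ψ, hψ⟩ := ((aeval u).restrictScalars K).exists_extend_of_fractions E
    (fun r => by simp [E, map_eq_zero_iff j hj, D.expAeval_eq_zero_iff hD u hstable]) hfrac
  have hψι : ∀ r, ψ (aeval u r) = E r := fun r => by simpa using hψ _ r 1 (by simp) (by simp)
  have hψint : ∀ b, ψ b ∈ j.range := by
    intro b
    have hcomp : (algebraMap B[X] F).comp ((D.expAeval hD u : A[X] →+* B[X]).comp C) =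
        (ψ : B →+* F).comp (algebraMap A B) := by
      ext a
      have h := hψι (C a)
      rw [aeval_C] at h
      simp [h, E, j]
    obtain ⟨y, hy⟩ := IsIntegrallyClosed.isIntegral_iff.1 ((hint b).map_of_comp_eq _ _ hcomp)
    exact ⟨y, hy⟩
  obtain ⟨Φ, hΦ⟩ := j.exists_comp_eq_of_forall_mem_range hj ψ hψint
  have hΦι : ∀ r, Φ (aeval u r) = D.expAeval hD u r := fun r => hj (by rw [hΦ, hψι]; rfl)
  refine ⟨Φ, hΦι, fun b => ?_⟩
  obtain ⟨p, q, hq, hb⟩ := hfrac b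
  have h0 := congrArg (coeff · 0) (congrArg Φ hb)
  simp only [map_mul, hΦι, mul_coeff_zero, coeff_zero_expAeval] at h0
  exact mul_left_cancel₀ hq (h0.trans hb.symm)

theorem exists_isLND_extension [IsIntegrallyClosed B] (hD : IsLND D)
    (hint : ∀ b : B, IsIntegral A b)
    (hstable : ∀ p, aeval u p = 0 → aeval u (D.mapCoeffsSelf p) = 0)
    (hfrac : ∀ b, ∃ p q : A[X], aeval u q ≠ 0 ∧ aeval u q * b = aeval u p) :
    ∃ D' : Derivation K B B, (∀ a, D' (algebraMap A B a) = algebraMap A B (D a)) ∧ IsLND D' := by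
  obtain ⟨Φ, hΦ, hΦ0⟩ := D.exists_algHom_eq_expAeval hD hint hstable hfrac
  let D' := Φ.coeffOneDerivation hΦ0
  have hD' : ∀ r, D' (aeval u r) = aeval u (D.mapCoeffsSelf r) := fun r => by
    rw [Φ.coeffOneDerivation_apply, hΦ, D.coeff_one_expAeval]
  have hder : ∀ r, Φ (D' (aeval u r)) = derivative (Φ (aeval u r)) := fun r => by
    rw [hD', hΦ, hΦ, D.derivative_expAeval]
  refine ⟨D', fun a => by simpa [D.mapCoeffsSelf_C] using hD' (C a),
    Φ.isLND_coeffOneDerivation hΦ0 fun b => ?_⟩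
  obtain ⟨p, q, hq, hb⟩ := hfrac b
  refine D'.algHom_apply_eq_derivative_of_mul_eq Φ (fun h => hq ?_) hb (hder p) (hder q)
  simpa [hΦ, D.coeff_zero_expAeval] using congrArg (coeff · 0) h

end Derivation

theorem stmt14_general {K A B : Type*} [Field K] [CharZero K]
    [CommRing A] [IsDomain A] [Algebra K A]
    (hAnorm : IsIntegrallyClosed A)
    [CommRing B] [IsDomain B] [Algebra K B] [Algebra A B] [IsScalarTower K A B]
    (hinj : Function.Injective (algebraMap A B))
    (D : Derivation K A A) (hlnd : IsLND D)
    (v : A) (hv : v ≠ 0) (hker : D v = 0)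
    (d : ℕ) (hd : 0 < d) (u : B) (hu : u ^ d = algebraMap A B v)
    (hBint : ∀ b : B, IsIntegral A b)
    (hBnorm : IsIntegrallyClosed B)
    (hBfrac : ∀ b : B, ∃ x ∈ Algebra.adjoin A ({u} : Set B),
      ∃ y ∈ Algebra.adjoin A ({u} : Set B), y ≠ 0 ∧ y * b = x) :
    ∃ D' : Derivation K B B,
      (∀ a : A, D' (algebraMap A B a) = algebraMap A B (D a)) ∧
      IsLND D' ∧
      ∀ D'' : Derivation K B B,
        (∀ a : A, D'' (algebraMap A B a) = algebraMap A B (D a)) → D'' = D' := by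
  have : CharZero B := charZero_of_injective_algebraMap (algebraMap K B).injective
  have : Module.IsTorsionFree A B := Module.isTorsionFree_iff_algebraMap_injective.2 hinj
  have hu0 : u ≠ 0 := by
    rintro rfl
    exact hv (hinj (by rw [← hu, zero_pow hd.ne', map_zero]))
  have hfrac : ∀ b, ∃ p q : A[X], aeval u q ≠ 0 ∧ aeval u q * b = aeval u p := by
    intro b
    obtain ⟨x, hx, y, hy, hy0, hb⟩ := hBfrac b
    rw [Algebra.adjoin_singleton_eq_range_aeval] at hx hy
    obtain ⟨⟨p, rfl⟩, ⟨q, rfl⟩⟩ := And.intro hx hy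
    exact ⟨p, q, hy0, hb⟩
  obtain ⟨D', hext, hD'⟩ := D.exists_isLND_extension hlnd hBint
    (fun _ => D.aeval_mapCoeffsSelf_eq_zero (hBint u) hu0 hker hd.ne' hu) hfrac
  have hkill : ∀ δ : Derivation K B B, (∀ a, δ (algebraMap A B a) = algebraMap A B (D a)) →
      δ u = 0 := fun δ hδ =>
    δ.apply_eq_zero_of_apply_pow_eq_zero hu0 hd.ne' (by rw [hu, hδ, hker, map_zero])
  refine ⟨D', hext, hD', fun D'' hD'' => Derivation.ext_of_aeval_fractions hfrac
    (fun a => by rw [hD'', hext]) (by rw [hkill D'' hD'', hkill D' hext])⟩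

/-- Lemma 1.7 (cyclic-LND): let `A` be a finitely generated normal domain over an
algebraically closed field `K` of characteristic `0`, `∂` a nonzero locally nilpotent
derivation on `A`, `v ∈ ker ∂` nonzero and `d > 0`.  Let `B` be the integral closure of
`A[u]` (with `u ^ d = v`) in its fraction field, i.e. `B` is a domain containing `A[u]`,
integral over `A`, integrally closed, and contained in `Frac(A[u])`.  Then `∂` extends
uniquely to a derivation of `B`, and the extension is locally nilpotent. -/
theorem stmt14 {K A B : Type*} [Field K] [IsAlgClosed K] [CharZero K]
    [CommRing A] [IsDomain A] [Algebra K A]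
    (hfg : Algebra.FiniteType K A) (hAnorm : IsIntegrallyClosed A)
    [CommRing B] [IsDomain B] [Algebra K B] [Algebra A B] [IsScalarTower K A B]
    (hinj : Function.Injective (algebraMap A B))
    (D : Derivation K A A) (hlnd : IsLND D) (hne : D ≠ 0)
    (v : A) (hv : v ≠ 0) (hker : D v = 0)
    (d : ℕ) (hd : 0 < d) (u : B) (hu : u ^ d = algebraMap A B v)
    (hBint : ∀ b : B, IsIntegral A b)
    (hBnorm : IsIntegrallyClosed B)
    (hBfrac : ∀ b : B, ∃ x ∈ Algebra.adjoin A ({u} : Set B),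
      ∃ y ∈ Algebra.adjoin A ({u} : Set B), y ≠ 0 ∧ y * b = x) :
    ∃ D' : Derivation K B B,
      (∀ a : A, D' (algebraMap A B a) = algebraMap A B (D a)) ∧
      IsLND D' ∧
      ∀ D'' : Derivation K B B,
        (∀ a : A, D'' (algebraMap A B a) = algebraMap A B (D a)) → D'' = D' :=
  stmt14_general hAnorm hinj D hlnd v hv hker d hd u hu hBint hBnorm hBfrac
end

section
/- Let A = ⊕_{m ∈ σ^∨ ∩ M} A_m χ^m ⊆ K₀[M] be an M-graded domain, where K₀ is a field containing K and each A_m ⊆ K₀, and let ∂ be a homogeneous locally nilpotent K-derivation on A with ∂(K₀ ∩ A) = 0 such that ∂ extends to a K₀-derivation of K₀[σ^∨ ∩ M]. Then this extension is a locally nilpotent K₀-derivation on K₀[σ^∨ ∩ M]. -/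
/-!
Since `D χ^(r • m)` is a monomial for some `r > 0`, Leibniz's rule applied to
`χ^(r • m) = (χ^m)^r` shows that `D` maps every monomial to a monomial, `D χ^m = w(m) χ^(μ m)`, and applied to `χ^(a + b) = χ^a χ^b` it shows that `w` is additive and that
`a + μ b = b + μ a` whenever `w a` and `w b` are nonzero. So, as long as they do not vanish, the
weights along the orbit `m, μ m, μ² m, …` form an arithmetic progression `w m + k d`, and
`D^k χ^m = 0` exactly when one of the first `k` of them vanishes. If `χ^m` were never killed, the
nilpotency of `D` on `χ^(r • μ^k m)` for suitable `r > 0` (the weight cone is all of `σ^∨`) would give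
relations `r (w m + k d) + i d = 0` for every `k`; in characteristic zero these force `w m = 0`.
-/

open scoped BigOperators Pointwise

noncomputable section

namespace AddMonoidAlgebra

theorem exists_eq_single_of_single_mul_eq_single {R G : Type*} [Semiring R] [NoZeroDivisors R]
    [Add G] [IsLeftCancelAdd G] {a b : G} {u c : R} {f : R[G]} (hu : u ≠ 0)
    (h : single a u * f = single b c) : ∃ b' c', f = single b' c' := by
  have : Nonempty G := ⟨a⟩
  have hcard : f.coeff.support.card ≤ 1 :=
    calc f.coeff.support.card = (single a u * f).coeff.support.card := by
          rw [support_coeff_single_mul f u (fun y => by simp [hu]) a, Finset.card_map]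
      _ ≤ 1 := by
          rw [h, coeff_single]
          exact Finset.card_le_one_iff_subset_singleton.2 ⟨b, Finsupp.support_single_subset⟩
  obtain ⟨b', c', hf⟩ := Finsupp.card_support_le_one'.mp hcard
  exact ⟨b', c', by rw [← coeff_inj, hf, coeff_single]⟩

theorem exists_derivation_single_one_eq_single {K G : Type*} [Field K] [CharZero K]
    [AddCommMonoid G] [IsLeftCancelAdd G] (D : Derivation K K[G] K[G]) {m : G} {r : ℕ}
    (hr : 0 < r) {c : K} (hc : c ≠ 0) (h : ∃ m' c', D (single (r • m) c) = single m' c') :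
    ∃ m' c', D (single m 1) = single m' c' := by
  obtain ⟨m', c', h⟩ := h
  have hpow : D (single (r • m) c) = single ((r - 1) • m) (c * r) * D (single m 1) := by
    have hmon : single (r • m) c = c • single m (1 : K) ^ r := by
      rw [single_pow, one_pow, smul_single', mul_one]
    rw [hmon, D.map_smul, D.leibniz_pow, single_pow, one_pow, smul_eq_mul,
      ← Nat.cast_smul_eq_nsmul K, smul_smul, ← smul_mul_assoc, smul_single', mul_one]
  exact exists_eq_single_of_single_mul_eq_single
    (mul_ne_zero hc (Nat.cast_ne_zero.2 hr.ne')) (hpow ▸ h)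

theorem isLND_of_forall_single {R G : Type*} [CommRing R] [AddCommMonoid G]
    (D : Derivation R R[G] R[G]) (h : ∀ m, ∃ k, (⇑D)^[k] (single m 1) = 0) : IsLND D := by
  have hmem_iff (x : R[G]) :
      x ∈ Module.End.maxGenEigenspace (D : Module.End R R[G]) 0 ↔ ∃ k, (⇑D)^[k] x = 0 := by
    simp [Module.End.mem_maxGenEigenspace, Module.End.pow_apply]
  intro x
  rw [← hmem_iff]
  induction x using AddMonoidAlgebra.induction_linear with
  | zero => exact zero_mem _
  | add x y hx hy => exact add_mem hx hy
  | single m c =>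
    rw [← mul_one c, ← smul_single']
    exact Submodule.smul_mem _ c ((hmem_iff _).2 (h m))

theorem eq_zero_of_forall_exists_nat_mul_add_eq_zero {R : Type*} [CommRing R] [IsDomain R]
    [CharZero R] {a d : R} (h : ∀ k : ℕ, ∃ r i : ℕ, 0 < r ∧ (r : R) * (a + k * d) + i * d = 0) :
    a = 0 := by
  obtain ⟨r, i, hr, hi⟩ := h 0
  obtain ⟨s, j, hs, hj⟩ := h (i + 1)
  have hlt : s * i < r * s * (i + 1) + r * j := by
    have : s * (i + 1) ≤ r * (s * (i + 1)) := Nat.le_mul_of_pos_left _ hr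
    nlinarith
  have hd : d = 0 := by
    have hcomb : (((r * s * (i + 1) + r * j : ℕ) : R) - (s * i : ℕ)) * d = 0 := by
      push_cast at hi hj ⊢
      linear_combination r * hj - s * hi
    exact (mul_eq_zero.1 hcomb).resolve_left (sub_ne_zero.2 (by exact_mod_cast hlt.ne'))
  simpa [hd, hr.ne'] using hi

section MonomialDerivation

variable {R G : Type*} [CommRing R] [AddCommMonoid G] {D : Derivation R R[G] R[G]}
  {μ : G → G} {w : G → R}

theorem derivation_single (hD : ∀ m, D (single m 1) = single (μ m) (w m)) (m : G) (c : R) :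
    D (single m c) = single (μ m) (c * w m) := by
  rw [← mul_one c, ← smul_single', D.map_smul, hD, smul_single', mul_one]

theorem single_derivation_add (hD : ∀ m, D (single m 1) = single (μ m) (w m)) (a b : G) :
    single (μ (a + b)) (w (a + b)) = single (a + μ b) (w b) + single (b + μ a) (w a) := by
  rw [← hD, ← one_mul (1 : R), ← single_mul_single, D.leibniz, hD, hD, smul_eq_mul,
    smul_eq_mul, single_mul_single, single_mul_single, one_mul, one_mul, add_comm]

theorem weight_add (hD : ∀ m, D (single m 1) = single (μ m) (w m)) (a b : G) :
    w (a + b) = w a + w b := by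
  have h := congrArg (fun x : R[G] => Finsupp.linearCombination R (fun _ => (1 : R)) x.coeff)
    (single_derivation_add hD a b)
  simpa [coeff_single, add_comm] using h

theorem weight_nsmul (hD : ∀ m, D (single m 1) = single (μ m) (w m)) (t : ℕ) (a : G) :
    w (t • a) = t * w a := by
  induction t with
  | zero => simpa using weight_add hD 0 0
  | succ t ih => rw [succ_nsmul, weight_add hD, ih]; push_cast; ring

theorem add_shift_comm (hD : ∀ m, D (single m 1) = single (μ m) (w m)) {a b : G}
    (ha : w a ≠ 0) (hb : w b ≠ 0) : a + μ b = b + μ a := by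
  by_contra hne
  have h := single_derivation_add hD a b
  have h₁ : (single (μ (a + b)) (w (a + b))).coeff (a + μ b) ≠ 0 := by
    rwa [h, coeff_add, coeff_single, coeff_single, Finsupp.add_apply, Finsupp.single_eq_same,
      Finsupp.single_eq_of_ne' (Ne.symm hne), add_zero]
  have h₂ : (single (μ (a + b)) (w (a + b))).coeff (b + μ a) ≠ 0 := by
    rwa [h, coeff_add, coeff_single, coeff_single, Finsupp.add_apply, Finsupp.single_eq_same,
      Finsupp.single_eq_of_ne' hne, zero_add]
  rw [coeff_single, Finsupp.single_apply_ne_zero] at h₁ h₂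
  exact hne (h₁.1.trans h₂.1.symm)

theorem weight_iterate_add (hD : ∀ m, D (single m 1) = single (μ m) (w m)) {m x : G} {i : ℕ}
    (hm : w m ≠ 0) (hx : ∀ t < i, w (μ^[t] x) ≠ 0) :
    w (μ^[i] x) + i * w m = w x + i * w (μ m) := by
  induction i with
  | zero => simp
  | succ i ih =>
    have hstep := congrArg w (add_shift_comm hD (hx i i.lt_succ_self) hm)
    rw [weight_add hD, weight_add hD] at hstep
    rw [Function.iterate_succ_apply']
    push_cast
    linear_combination ih (fun t ht => hx t (by omega)) - hstep

theorem iterate_derivation_single (hD : ∀ m, D (single m 1) = single (μ m) (w m)) (k : ℕ)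
    (m : G) (c : R) :
    (⇑D)^[k] (single m c) = single (μ^[k] m) (c * ∏ i ∈ Finset.range k, w (μ^[i] m)) := by
  induction k with
  | zero => simp
  | succ k ih =>
    rw [Function.iterate_succ_apply', ih, derivation_single hD, Function.iterate_succ_apply',
      Finset.prod_range_succ, mul_assoc]

theorem iterate_derivation_single_eq_zero_iff [IsDomain R]
    (hD : ∀ m, D (single m 1) = single (μ m) (w m)) {k : ℕ} {m : G} {c : R} (hc : c ≠ 0) :
    (⇑D)^[k] (single m c) = 0 ↔ ∃ i < k, w (μ^[i] m) = 0 := by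
  rw [iterate_derivation_single hD, single_eq_zero, mul_eq_zero, Finset.prod_eq_zero_iff]
  simp [hc]

theorem exists_iterate_derivation_single_eq_zero [IsDomain R] [CharZero R]
    (hD : ∀ m, D (single m 1) = single (μ m) (w m))
    (hkill : ∀ m, ∃ r, 0 < r ∧ ∃ k, (⇑D)^[k] (single (r • m) 1) = 0) (m : G) :
    ∃ k, (⇑D)^[k] (single m 1) = 0 := by
  classical
  by_contra! hm
  have hw (i : ℕ) : w (μ^[i] m) ≠ 0 := fun hi =>
    hm (i + 1) ((iterate_derivation_single_eq_zero_iff hD one_ne_zero).2 ⟨i, i.lt_succ_self, hi⟩)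
  have hm0 : w m ≠ 0 := hw 0
  have hw_orbit (k : ℕ) : w (μ^[k] m) = w m + k * (w (μ m) - w m) := by
    linear_combination weight_iterate_add hD hm0 (fun t _ => hw t) (i := k)
  refine hm0 (eq_zero_of_forall_exists_nat_mul_add_eq_zero (d := w (μ m) - w m) fun k => ?_)
  obtain ⟨r, hr, k', hk'⟩ := hkill (μ^[k] m)
  have hex : ∃ i, w (μ^[i] (r • μ^[k] m)) = 0 := by
    obtain ⟨i, -, hi⟩ := (iterate_derivation_single_eq_zero_iff hD one_ne_zero).1 hk'
    exact ⟨i, hi⟩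
  have h := weight_iterate_add hD hm0 (fun t ht => Nat.find_min hex ht) (i := Nat.find hex)
  rw [Nat.find_spec hex, weight_nsmul hD, hw_orbit] at h
  exact ⟨r, Nat.find hex, hr, by linear_combination -h⟩

end MonomialDerivation

end AddMonoidAlgebra

open AddMonoidAlgebra in
theorem stmt15_general {n : ℕ} (K K₀ : Type*) [Field K] [CharZero K] [Field K₀] [Algebra K K₀]
    (σ : Set (Vec n))
    (A : Subalgebra K (AddMonoidAlgebra K₀ ↥(latticeCone σ)))
    (hweight : ∀ m : latticeCone σ, ∃ r : ℕ, 0 < r ∧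
      ∃ c : K₀, c ≠ 0 ∧ single (r • m) c ∈ A)
    (D : Derivation K₀ (AddMonoidAlgebra K₀ ↥(latticeCone σ))
      (AddMonoidAlgebra K₀ ↥(latticeCone σ)))
    (hlndA : ∀ x ∈ A, ∃ k : ℕ, (⇑D)^[k] x = 0)
    (hhom : ∀ (m : latticeCone σ) (c : K₀), single m c ∈ A →
      ∃ (m' : latticeCone σ) (c' : K₀), D (single m c) = single m' c') :
    IsLND D := by
  have : CharZero K₀ := charZero_of_injective_algebraMap (algebraMap K K₀).injective
  have hmonomial (m : latticeCone σ) : ∃ m' c', D (single m 1) = single m' c' := by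
    obtain ⟨r, hr, c, hc, hA⟩ := hweight m
    exact exists_derivation_single_one_eq_single D hr hc (hhom _ _ hA)
  choose μ w hD using hmonomial
  refine isLND_of_forall_single D (exists_iterate_derivation_single_eq_zero hD fun m => ?_)
  obtain ⟨r, hr, c, hc, hA⟩ := hweight m
  obtain ⟨k, hk⟩ := hlndA _ hA
  exact ⟨r, hr, k, (iterate_derivation_single_eq_zero_iff hD one_ne_zero).2
    ((iterate_derivation_single_eq_zero_iff hD hc).1 hk)⟩

open AddMonoidAlgebra in
/-- Lemma 1.9(ii) (LND-tensor): let `A ⊆ K₀[σ^∨ ∩ M]` be a graded subalgebra whose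
weight cone is all of `σ^∨` (every lattice point of `σ^∨` has a positive multiple with
nonzero piece), and let `D` be a `K₀`-derivation of `K₀[σ^∨ ∩ M]` stabilizing `A`,
homogeneous and locally nilpotent on `A`.  Then `D` is locally nilpotent on all of
`K₀[σ^∨ ∩ M]`. -/
theorem stmt15 {n : ℕ} (K K₀ : Type*) [Field K] [CharZero K] [Field K₀] [Algebra K K₀]
    (σ : Set (Vec n))
    (hσ : IsRatPolyCone σ) (hpt : PointedCone' σ) (hfull : FullDim (dualCone σ))
    (A : Subalgebra K (AddMonoidAlgebra K₀ ↥(latticeCone σ)))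
    (hgraded : ∀ x ∈ A, ∀ m : latticeCone σ, single m (x.coeff m) ∈ A)
    (hweight : ∀ m : latticeCone σ, ∃ r : ℕ, 0 < r ∧
      ∃ c : K₀, c ≠ 0 ∧ single (r • m) c ∈ A)
    (D : Derivation K₀ (AddMonoidAlgebra K₀ ↥(latticeCone σ))
      (AddMonoidAlgebra K₀ ↥(latticeCone σ)))
    (hstab : ∀ x ∈ A, D x ∈ A)
    (hlndA : ∀ x ∈ A, ∃ k : ℕ, (⇑D)^[k] x = 0)
    (hhom : ∀ (m : latticeCone σ) (c : K₀), single m c ∈ A →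
      ∃ (m' : latticeCone σ) (c' : K₀), D (single m c) = single m' c') :
    IsLND D :=
  stmt15_general K K₀ σ A hweight D hlndA hhom
end
end
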